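/- arXiv:2012.05602 — 4 statements merged into one kernel-verified Lean document; each statement's English description precedes it below -/
import Mathlib

section
/- Let {f_n}_{n≥1} be a tight sequence of random elements of H(D) and write f_n(z) = Σ_{k=0}^∞ P_k^{(n)} z^k for the Taylor expansion at 0. Suppose there is a sequence of complex random variables {P_m}_{m≥0} such that for every m ≥ 0 the random vector (P_0^{(n)}, …, P_m^{(n)}) converges in law to (P_0, …, P_m) as n → ∞. Then f(z) = Σ_{k=0}^∞ P_k z^k is almost surely a well-defined element of H(D), and f_n converges in law to f in H(D). -/
/-!
Tightness confines every `fₙ`, up to probability `ε`, to one compact set `K ⊆ H(D)`. Cauchy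
estimates bound the Taylor coefficients uniformly on `K`, so the Taylor polynomials `Tₘ g` converge
to `g` uniformly for `g ∈ K`, and `E φ(fₙ)` is uniformly close to `E φ(Tₘ fₙ)`. The latter is a
bounded continuous function of the first `m + 1` coefficients, hence converges by hypothesis.
For the limit, the portmanteau theorem applied to the compact image of `K` in `ℕ → ℂ` (seen
through its finite-dimensional projections) shows that `(P_k)` is almost surely the coefficient
sequence of some `f ∈ H(D)`, and dominated convergence gives `E φ(Tₘ f) → E φ(f)`.
-/

open MeasureTheory ProbabilityTheory Filter Metric

noncomputable section

/-- The space `H(D)` of holomorphic functions on the open unit disc. -/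
def HolD : Type := {f : ℂ → ℂ // DifferentiableOn ℂ f (ball (0 : ℂ) 1)}

/-- Restriction of an element of `H(D)` to a continuous map on the disc. -/
def HolD.restrict (f : HolD) : C(ball (0 : ℂ) 1, ℂ) :=
  ⟨(ball (0 : ℂ) 1).restrict f.1, f.2.continuousOn.restrict⟩

/-- `H(D)` carries the compact-open topology (topology of locally uniform convergence on
compact subsets of the disc). -/
instance : TopologicalSpace HolD :=
  TopologicalSpace.induced HolD.restrict inferInstance

instance : MeasurableSpace HolD := borel HolD
instance : BorelSpace HolD := ⟨rfl⟩

open Topology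
open scoped ENNReal NNReal Uniformity BoundedContinuousFunction

theorem eq_iteratedDeriv_div_factorial_of_hasSum {f : ℂ → ℂ} {a : ℕ → ℂ} {R : ℝ} (hR : 0 < R)
    (h : ∀ z ∈ ball (0 : ℂ) R, HasSum (fun k => a k * z ^ k) (f z)) :
    a = fun k => iteratedDeriv k f 0 / k.factorial := by
  set r : ℝ≥0 := ⟨R / 2, by positivity⟩
  have hr0 : 0 < (r : ℝ) := half_pos hR
  have hr : (r : ℝ) < R := half_lt_self hR
  have hrad : (r : ℝ≥0∞) ≤ (FormalMultilinearSeries.ofScalars ℂ a).radius := by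
    refine FormalMultilinearSeries.le_radius_of_tendsto _ (l := 0) ?_
    have := (h r (by simpa [abs_of_nonneg r.2] using hr)).summable.tendsto_atTop_zero.norm
    simpa [FormalMultilinearSeries.ofScalars_norm, abs_of_nonneg r.2] using this
  have hp : HasFPowerSeriesOnBall f (FormalMultilinearSeries.ofScalars ℂ a) 0 r := by
    refine ⟨hrad, by exact_mod_cast hr0, fun {y} hy => ?_⟩
    have hy' : y ∈ ball (0 : ℂ) R := by
      rw [Metric.eball_coe] at hy
      exact ball_subset_ball hr.le hy
    simpa [FormalMultilinearSeries.ofScalars_apply_eq, mul_comm] using h y hy'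
  exact FormalMultilinearSeries.ofScalars_series_injective ℂ ℂ
    (hp.hasFPowerSeriesAt.eq_formalMultilinearSeries hp.analyticAt.hasFPowerSeriesAt)

theorem norm_iteratedDeriv_div_factorial_mul_pow_le {f : ℂ → ℂ} {c : ℂ} {r M : ℝ} (hr : 0 < r)
    (hf : DiffContOnCl ℂ f (ball c r)) (hM : ∀ z ∈ sphere c r, ‖f z‖ ≤ M) (k : ℕ) :
    ‖iteratedDeriv k f c / k.factorial‖ * r ^ k ≤ M := by
  have := Complex.norm_iteratedDeriv_le_of_forall_mem_sphere_norm_le k hr hf hM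
  rw [norm_div, Complex.norm_natCast, div_mul_eq_mul_div, div_le_iff₀ (by positivity)]
  rw [le_div_iff₀ (by positivity)] at this
  linarith

theorem norm_sub_sum_range_le_of_hasSum {𝕜 : Type*} [NormedField 𝕜] {a : ℕ → 𝕜} {z s : 𝕜}
    {r ρ M : ℝ} (hρ : 0 < ρ) (hrρ : r < ρ) (ha : ∀ k, ‖a k‖ * ρ ^ k ≤ M) (hz : ‖z‖ ≤ r)
    (hs : HasSum (fun k => a k * z ^ k) s) (m : ℕ) :
    ‖s - ∑ k ∈ Finset.range m, a k * z ^ k‖ ≤ M * (r / ρ) ^ m / (1 - r / ρ) := by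
  have hq0 : 0 ≤ r / ρ := div_nonneg ((norm_nonneg z).trans hz) hρ.le
  have hq1 : r / ρ < 1 := (div_lt_one hρ).mpr hrρ
  have hgeom : HasSum (fun k => M * (r / ρ) ^ (k + m)) (M * (r / ρ) ^ m / (1 - r / ρ)) := by
    simpa [pow_add, mul_assoc, mul_comm, mul_left_comm, div_eq_mul_inv] using
      (hasSum_geometric_of_lt_one hq0 hq1).mul_left (M * (r / ρ) ^ m)
  refine ((hasSum_nat_add_iff' m).mpr hs).norm_le_of_bounded hgeom fun k => ?_
  calc ‖a (k + m) * z ^ (k + m)‖ ≤ ‖a (k + m)‖ * ρ ^ (k + m) * (r / ρ) ^ (k + m) := by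
        rw [norm_mul, norm_pow, mul_assoc, ← mul_pow, mul_div_cancel₀ _ hρ.ne']
        gcongr
    _ ≤ M * (r / ρ) ^ (k + m) := by gcongr; exact ha _

theorem TendstoUniformlyOn.comp_of_isCompact {α β γ ι : Type*} [UniformSpace α]
    [UniformSpace β] {F : ι → γ → α} {f : γ → α} {l : Filter ι} {s : Set γ} {K : Set α}
    (hF : TendstoUniformlyOn F f l s) (hK : IsCompact K) (hfK : Set.MapsTo f s K) {φ : α → β}
    (hφ : ∀ x ∈ K, ContinuousAt φ x) :
    TendstoUniformlyOn (fun i x => φ (F i x)) (φ ∘ f) l s := fun _ hu =>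
  (hF _ (hK.uniformContinuousAt_of_continuousAt φ hφ hu)).mono fun _ hi x hx =>
    hi x hx (hfK hx)

def seqPrefix {E : Type*} (m : ℕ) (x : ℕ → E) : Fin (m + 1) → E := fun i => x i

theorem continuous_seqPrefix {E : Type*} [TopologicalSpace E] (m : ℕ) :
    Continuous (seqPrefix (E := E) m) :=
  continuous_pi fun _ => continuous_apply _

theorem IsClosed.mem_of_forall_seqPrefix_mem {E : Type*} [TopologicalSpace E]
    {C : Set (ℕ → E)} (hC : IsClosed C) {x : ℕ → E} (h : ∀ m, seqPrefix m x ∈ seqPrefix m '' C) :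
    x ∈ C := by
  choose y hyC hy using h
  refine hC.mem_of_tendsto (f := y) (b := atTop)
    (tendsto_pi_nhds.mpr fun k => tendsto_const_nhds.congr' ?_) (Eventually.of_forall hyC)
  filter_upwards [eventually_ge_atTop k] with m hm
  exact (congrFun (hy m) ⟨k, Nat.lt_succ_of_le hm⟩).symm

section Portmanteau

variable {Ω Ω' : Type*} [MeasurableSpace Ω] [MeasurableSpace Ω'] {P : Measure Ω}
  [IsProbabilityMeasure P] {P' : Measure Ω'} [IsProbabilityMeasure P'] {ι : Type*}
  {l : Filter ι} [NeBot l]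

theorem measure_preimage_le_of_tendsto_integral {E : Type*} [MeasurableSpace E]
    [PseudoEMetricSpace E] [OpensMeasurableSpace E] {X : ι → Ω → E} {Y : Ω' → E}
    (hX : ∀ i, Measurable (X i)) (hY : Measurable Y)
    (hXY : ∀ φ : E →ᵇ ℝ, Tendsto (fun i => ∫ ω, φ (X i ω) ∂P) l (𝓝 (∫ ω, φ (Y ω) ∂P')))
    {U : Set E} (hU : IsOpen U) {a : ℝ≥0∞} (ha : ∀ᶠ i in l, P (X i ⁻¹' U) ≤ a) :
    P' (Y ⁻¹' U) ≤ a := by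
  let μ : ι → ProbabilityMeasure E := fun i =>
    ⟨P.map (X i), Measure.isProbabilityMeasure_map (hX i).aemeasurable⟩
  let ν : ProbabilityMeasure E := ⟨P'.map Y, Measure.isProbabilityMeasure_map hY.aemeasurable⟩
  have hμν : Tendsto μ l (𝓝 ν) := by
    refine ProbabilityMeasure.tendsto_iff_forall_integral_tendsto.mpr fun φ => ?_
    simpa only [μ, ν, ProbabilityMeasure.coe_mk,
      integral_map (hX _).aemeasurable φ.continuous.aestronglyMeasurable,
      integral_map hY.aemeasurable φ.continuous.aestronglyMeasurable] using hXY φ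
  have hliminf := ProbabilityMeasure.le_liminf_measure_open_of_tendsto hμν hU
  simp only [μ, ν, ProbabilityMeasure.coe_mk, Measure.map_apply (hX _) hU.measurableSet,
    Measure.map_apply hY hU.measurableSet] at hliminf
  exact hliminf.trans (liminf_le_of_frequently_le' ha.frequently)

theorem measure_preimage_compl_le_of_tendsto_integral_seqPrefix {E : Type*} [MetricSpace E]
    [SecondCountableTopology E] [MeasurableSpace E] [BorelSpace E] {X : ι → Ω → ℕ → E}
    {Y : Ω' → ℕ → E} (hX : ∀ i k, Measurable fun ω => X i ω k) (hY : ∀ k, Measurable fun ω => Y ω k)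
    (hXY : ∀ m, ∀ φ : (Fin (m + 1) → E) →ᵇ ℝ, Tendsto (fun i => ∫ ω, φ (seqPrefix m (X i ω)) ∂P)
      l (𝓝 (∫ ω, φ (seqPrefix m (Y ω)) ∂P')))
    {C : Set (ℕ → E)} (hC : IsCompact C) {a : ℝ≥0∞} (ha : ∀ᶠ i in l, P (X i ⁻¹' Cᶜ) ≤ a) :
    P' (Y ⁻¹' Cᶜ) ≤ a := by
  let A : ℕ → Set Ω' := fun m => (fun ω => seqPrefix m (Y ω)) ⁻¹' (seqPrefix m '' C)ᶜ
  have hAC : ⋃ m, A m = Y ⁻¹' Cᶜ := by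
    refine Set.Subset.antisymm (Set.iUnion_subset fun m ω hω hYω => hω ⟨Y ω, hYω, rfl⟩)
      fun ω hω => ?_
    by_contra h
    simp only [A, Set.mem_iUnion, Set.mem_preimage, Set.mem_compl_iff, not_exists,
      not_not] at h
    exact hω (hC.isClosed.mem_of_forall_seqPrefix_mem h)
  have hA_mono : Monotone A := by
    refine fun m m' hmm' ω hω ⟨y, hyC, hy⟩ => hω ⟨y, hyC, funext fun k => ?_⟩
    exact congrFun hy ⟨k, by omega⟩
  have hA_open (m : ℕ) : IsOpen (seqPrefix m '' C)ᶜ :=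
    (hC.image (continuous_seqPrefix m)).isClosed.isOpen_compl
  have hA_meas (m : ℕ) : Measurable fun ω => seqPrefix m (Y ω) :=
    measurable_pi_lambda _ fun k => hY k
  rw [← hAC, hA_mono.measure_iUnion]
  refine iSup_le fun m => measure_preimage_le_of_tendsto_integral
    (X := fun i ω => seqPrefix m (X i ω)) (fun i => measurable_pi_lambda _ fun k => hX i k)
    (hA_meas m) (hXY m) (hA_open m) ?_
  refine ha.mono fun i hi => le_trans (measure_mono ?_) hi
  exact fun ω hω hXω => hω ⟨X i ω, hXω, rfl⟩

end Portmanteau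

theorem tendsto_of_forall_eventually_dist_le {ι α : Type*} [PseudoMetricSpace α] {l : Filter ι}
    {a : ι → α} {b : ℕ → ι → α} {β : ℕ → α} {L : α} (hb : ∀ m, Tendsto (b m) l (𝓝 (β m)))
    (hβ : Tendsto β atTop (𝓝 L)) (hab : ∀ ε > 0, ∀ᶠ m in atTop, ∀ᶠ i in l, dist (a i) (b m i) ≤ ε) :
    Tendsto a l (𝓝 L) := by
  refine Metric.tendsto_nhds.mpr fun ε hε => ?_
  obtain ⟨m, hβm, ham⟩ :=
    ((Metric.tendsto_nhds.mp hβ (ε / 3) (by positivity)).and (hab (ε / 3) (by positivity))).exists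
  filter_upwards [ham, Metric.tendsto_nhds.mp (hb m) (ε / 3) (by positivity)] with i hai hbi
  linarith [dist_triangle4 (a i) (b m i) (β m) L]

theorem norm_integral_sub_integral_le {Ω E : Type*} [MeasurableSpace Ω] [NormedAddCommGroup E]
    [NormedSpace ℝ E] {P : Measure Ω} [IsFiniteMeasure P] {u v : Ω → E} {C δ : ℝ}
    (hu : Integrable u P) (hv : Integrable v P) (huC : ∀ ω, ‖u ω‖ ≤ C) (hvC : ∀ ω, ‖v ω‖ ≤ C)
    {s : Set Ω} (hs : MeasurableSet s) (huv : ∀ ω ∈ s, ‖u ω - v ω‖ ≤ δ) :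
    ‖∫ ω, u ω ∂P - ∫ ω, v ω ∂P‖ ≤ δ * P.real s + 2 * C * P.real sᶜ := by
  rw [← integral_sub hu hv, ← integral_add_compl hs (f := fun ω => u ω - v ω) (hu.sub hv)]
  refine (norm_add_le _ _).trans (add_le_add ?_ ?_)
  · exact norm_setIntegral_le_of_norm_le_const (measure_lt_top P s) huv
  · refine norm_setIntegral_le_of_norm_le_const (measure_lt_top P sᶜ) fun ω _ => ?_
    linarith [norm_sub_le (u ω) (v ω), huC ω, hvC ω]

namespace HolD

theorem isInducing_restrict : IsInducing HolD.restrict := ⟨rfl⟩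

-- Elements of `HolD` that differ only off the disc are inseparable: `HolD` is R1 but not T2.
instance : R1Space HolD := isInducing_restrict.r1Space

instance : Nonempty HolD := ⟨⟨0, differentiableOn_const 0⟩⟩

instance : UniformSpace HolD :=
  (UniformSpace.comap restrict inferInstance).replaceTopology (by
    rw [UniformSpace.toTopologicalSpace_comap]; rfl)

theorem hasBasis_uniformity :
    (𝓤 HolD).HasBasis (fun p : ℝ × ℝ => p.1 < 1 ∧ 0 < p.2) fun p =>
      {q : HolD × HolD | ∀ z ∈ closedBall (0 : ℂ) p.1, dist (q.1.1 z) (q.2.1 z) < p.2} := by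
  refine ((Metric.uniformity_basis_dist.compactConvergenceUniformity).comap
    fun q : HolD × HolD => (q.1.restrict, q.2.restrict)).to_hasBasis ?_ ?_
  · rintro ⟨S, δ⟩ ⟨hS, hδ⟩
    have hS' : IsClosed (((↑) : ball (0 : ℂ) 1 → ℂ) '' S) :=
      (Subtype.isCompact_iff.mp hS).isClosed
    obtain ⟨r, hr, hSr⟩ := exists_lt_subset_ball hS' (by rintro _ ⟨x, -, rfl⟩; exact x.2)
    refine ⟨(r, δ), ⟨hr, hδ⟩, fun q hq x hx => hq x ?_⟩
    exact ball_subset_closedBall (hSr ⟨x, hx, rfl⟩)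
  · rintro ⟨r, δ⟩ ⟨hr, hδ⟩
    refine ⟨(((↑) : ball (0 : ℂ) 1 → ℂ) ⁻¹' closedBall 0 r, δ), ⟨?_, hδ⟩, ?_⟩
    · rw [Subtype.isCompact_iff, Subtype.image_preimage_coe,
        Set.inter_eq_right.mpr (closedBall_subset_ball hr)]
      exact isCompact_closedBall 0 r
    · exact fun q hq z hz => hq ⟨z, closedBall_subset_ball hr hz⟩ hz

theorem eventually_nhds_dist_lt (g : HolD) {r δ : ℝ} (hr : r < 1) (hδ : 0 < δ) :
    ∀ᶠ h in 𝓝 g, ∀ z ∈ closedBall (0 : ℂ) r, dist (g.1 z) (h.1 z) < δ := by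
  rw [nhds_eq_comap_uniformity]
  exact hasBasis_uniformity.comap (Prod.mk g) |>.mem_of_mem (i := (r, δ)) ⟨hr, hδ⟩

theorem tendstoUniformlyOn_of_closedBall {ι α : Type*} {F : ι → α → HolD} {f : α → HolD}
    {l : Filter ι} {s : Set α}
    (h : ∀ r < 1, ∀ δ > 0, ∀ᶠ i in l, ∀ x ∈ s, ∀ z ∈ closedBall (0 : ℂ) r,
      dist ((f x).1 z) ((F i x).1 z) < δ) :
    TendstoUniformlyOn F f l s := fun _ hu =>
  let ⟨⟨r, δ⟩, ⟨hr, hδ⟩, hsub⟩ := hasBasis_uniformity.mem_iff.mp hu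
  (h r hr δ hδ).mono fun _ hi x hx => hsub (hi x hx)

def coeff (g : HolD) (k : ℕ) : ℂ := iteratedDeriv k g.1 0 / k.factorial

theorem hasSum_coeff (g : HolD) {z : ℂ} (hz : z ∈ ball (0 : ℂ) 1) :
    HasSum (fun k => g.coeff k * z ^ k) (g.1 z) := by
  simpa [coeff, div_eq_inv_mul, mul_comm, mul_left_comm]
    using Complex.hasSum_taylorSeries_on_ball g.2 hz

theorem coeff_eq_of_hasSum {g : HolD} {a : ℕ → ℂ}
    (h : ∀ z ∈ ball (0 : ℂ) 1, HasSum (fun k => a k * z ^ k) (g.1 z)) : a = g.coeff :=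
  eq_iteratedDeriv_div_factorial_of_hasSum one_pos h

theorem norm_coeff_mul_pow_le (g : HolD) {r M : ℝ} (hr0 : 0 < r) (hr1 : r < 1)
    (hM : ∀ z ∈ sphere (0 : ℂ) r, ‖g.1 z‖ ≤ M) (k : ℕ) : ‖g.coeff k‖ * r ^ k ≤ M :=
  norm_iteratedDeriv_div_factorial_mul_pow_le hr0
    (g.2.diffContOnCl_ball (closedBall_subset_ball hr1)) hM k

theorem coeff_sub_coeff (g h : HolD) (k : ℕ) :
    g.coeff k - h.coeff k = iteratedDeriv k (g.1 - h.1) 0 / k.factorial := by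
  have hg := (g.2.contDiffOn (n := k) isOpen_ball).contDiffAt (ball_mem_nhds 0 one_pos)
  have hh := (h.2.contDiffOn (n := k) isOpen_ball).contDiffAt (ball_mem_nhds 0 one_pos)
  rw [coeff, coeff, ← sub_div, iteratedDeriv_sub hg hh]

theorem continuous_coeff (k : ℕ) : Continuous fun g : HolD => g.coeff k := by
  refine continuous_iff_continuousAt.mpr fun g => Metric.tendsto_nhds.mpr fun ε hε => ?_
  filter_upwards [g.eventually_nhds_dist_lt (r := 2⁻¹) (by norm_num)
    (show 0 < ε / 2 ^ (k + 1) by positivity)] with h hh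
  have hdiff : DiffContOnCl ℂ (h.1 - g.1) (ball 0 2⁻¹) :=
    (h.2.sub g.2).diffContOnCl_ball (closedBall_subset_ball (by norm_num))
  have := norm_iteratedDeriv_div_factorial_mul_pow_le (by norm_num) hdiff
    (fun z hz => by simpa [dist_eq_norm'] using (hh z (sphere_subset_closedBall hz)).le) k
  have hpow : (2 : ℝ)⁻¹ ^ k * 2 ^ k = 1 := by rw [← mul_pow]; norm_num
  rw [dist_eq_norm, coeff_sub_coeff]
  calc _ = ‖iteratedDeriv k (h.1 - g.1) 0 / k.factorial‖ * 2⁻¹ ^ k * 2 ^ k := by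
        rw [mul_assoc, hpow, mul_one]
    _ ≤ ε / 2 ^ (k + 1) * 2 ^ k := by gcongr
    _ < ε := by
      rw [pow_succ', ← div_div, div_mul_cancel₀ _ (by positivity)]
      linarith

def poly (m : ℕ) (a : Fin (m + 1) → ℂ) : HolD :=
  ⟨fun z => ∑ i, a i * z ^ (i : ℕ), Differentiable.differentiableOn (by fun_prop)⟩

theorem continuous_poly (m : ℕ) : Continuous (poly m) :=
  isInducing_restrict.continuous_iff.mpr <|
    ContinuousMap.continuous_of_continuous_uncurry _ (by
      change Continuous fun p : (Fin (m + 1) → ℂ) × ball (0 : ℂ) 1 =>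
        ∑ i, p.1 i * (p.2 : ℂ) ^ (i : ℕ)
      fun_prop)

def taylorPoly (m : ℕ) (g : HolD) : HolD := poly m (seqPrefix m g.coeff)

theorem continuous_taylorPoly (m : ℕ) : Continuous (taylorPoly m) :=
  (continuous_poly m).comp <| (continuous_seqPrefix m).comp <| continuous_pi continuous_coeff

theorem taylorPoly_apply (m : ℕ) (g : HolD) (z : ℂ) :
    (taylorPoly m g).1 z = ∑ k ∈ Finset.range (m + 1), g.coeff k * z ^ k :=
  Fin.sum_univ_eq_sum_range (fun k => g.coeff k * z ^ k) (m + 1)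

theorem exists_forall_norm_le {K : Set HolD} (hK : IsCompact K) {r : ℝ} (hr : r < 1) :
    ∃ M, ∀ g ∈ K, ∀ z ∈ closedBall (0 : ℂ) r, ‖g.1 z‖ ≤ M := by
  have : LocallyCompactSpace (ball (0 : ℂ) 1) := isOpen_ball.locallyCompactSpace
  have hS : IsCompact (((↑) : ball (0 : ℂ) 1 → ℂ) ⁻¹' closedBall 0 r) := by
    rw [Subtype.isCompact_iff, Subtype.image_preimage_coe,
      Set.inter_eq_right.mpr (closedBall_subset_ball hr)]
    exact isCompact_closedBall 0 r
  obtain ⟨M, hM⟩ := (hK.prod hS).exists_bound_of_continuousOn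
    (continuous_eval.comp (isInducing_restrict.continuous.prodMap continuous_id)).continuousOn
  exact ⟨M, fun g hg z hz => hM (g, ⟨z, closedBall_subset_ball hr hz⟩) ⟨hg, hz⟩⟩

theorem exists_forall_norm_coeff_mul_pow_le {K : Set HolD} (hK : IsCompact K) {ρ : ℝ}
    (hρ0 : 0 < ρ) (hρ1 : ρ < 1) : ∃ M, ∀ g ∈ K, ∀ k, ‖g.coeff k‖ * ρ ^ k ≤ M :=
  let ⟨M, hM⟩ := exists_forall_norm_le hK hρ1
  ⟨M, fun g hg => g.norm_coeff_mul_pow_le hρ0 hρ1 fun z hz =>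
    hM g hg z (sphere_subset_closedBall hz)⟩

theorem tendstoUniformlyOn_taylorPoly {K : Set HolD} (hK : IsCompact K) :
    TendstoUniformlyOn taylorPoly id atTop K := by
  refine tendstoUniformlyOn_of_closedBall fun r hr δ hδ => ?_
  set r' := max r 0
  obtain ⟨ρ, hrρ, hρ1⟩ := exists_between (max_lt hr one_pos)
  have hρ0 : 0 < ρ := (le_max_right r 0).trans_lt hrρ
  obtain ⟨M, hM⟩ := exists_forall_norm_coeff_mul_pow_le hK hρ0 hρ1
  have htail : Tendsto (fun m => M * (r' / ρ) ^ (m + 1) / (1 - r' / ρ)) atTop (𝓝 0) := by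
    simpa using ((tendsto_pow_atTop_nhds_zero_of_lt_one (by positivity)
      ((div_lt_one hρ0).mpr hrρ)).comp (tendsto_add_atTop_nat 1)).const_mul M |>.div_const _
  filter_upwards [htail.eventually (gt_mem_nhds hδ)] with m hm g hg z hz
  have hz1 : z ∈ ball (0 : ℂ) 1 := closedBall_subset_ball hr (by simpa using hz)
  rw [id, dist_eq_norm, taylorPoly_apply]
  exact (norm_sub_sum_range_le_of_hasSum hρ0 hrρ (hM g hg)
    ((mem_closedBall_zero_iff.mp hz).trans (le_max_left r 0)) (g.hasSum_coeff hz1) _).trans_lt hm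

theorem tendsto_taylorPoly (g : HolD) : Tendsto (fun m => taylorPoly m g) atTop (𝓝 g) :=
  (tendstoUniformlyOn_taylorPoly isCompact_singleton).tendsto_at rfl

section RandomElements

variable {Ω Ω' ι : Type*} [MeasurableSpace Ω] [MeasurableSpace Ω'] {P : Measure Ω}
  [IsProbabilityMeasure P] {P' : Measure Ω'} [IsProbabilityMeasure P'] {l : Filter ι}
  {X : ι → Ω → HolD}

theorem ae_exists_coeff_eq [NeBot l] (hX : ∀ i, Measurable (X i))
    (htight : ∀ ε > 0, ∃ K, IsCompact K ∧ ∀ᶠ i in l, P (X i ⁻¹' Kᶜ) ≤ ENNReal.ofReal ε)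
    {Y : Ω' → ℕ → ℂ} (hY : ∀ k, Measurable fun ω => Y ω k)
    (hXY : ∀ m, ∀ φ : (Fin (m + 1) → ℂ) →ᵇ ℝ,
      Tendsto (fun i => ∫ ω, φ (seqPrefix m (X i ω).coeff) ∂P) l
        (𝓝 (∫ ω, φ (seqPrefix m (Y ω)) ∂P'))) :
    ∀ᵐ ω ∂P', ∃ g : HolD, g.coeff = Y ω := by
  refine ae_iff.mpr (le_antisymm (ENNReal.le_of_forall_pos_le_add fun ε hε _ => ?_) zero_le)
  obtain ⟨K, hK, hXK⟩ := htight ε hε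
  have hlim := measure_preimage_compl_le_of_tendsto_integral_seqPrefix
    (X := fun i ω => (X i ω).coeff) (fun i k => (continuous_coeff k).measurable.comp (hX i)) hY
    hXY (hK.image (continuous_pi continuous_coeff))
    (hXK.mono fun i hi => le_trans (measure_mono fun ω hω hXω => hω ⟨X i ω, hXω, rfl⟩) hi)
  rw [zero_add, ← ENNReal.ofReal_coe_nnreal]
  refine le_trans (measure_mono ?_) hlim
  rintro ω hω ⟨g, -, hg⟩
  exact hω ⟨g, hg⟩

theorem eventually_dist_integral_taylorPoly_le (hX : ∀ i, Measurable (X i))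
    (htight : ∀ ε > 0, ∃ K, IsCompact K ∧ ∀ᶠ i in l, P (X i ⁻¹' Kᶜ) ≤ ENNReal.ofReal ε)
    (φ : HolD →ᵇ ℝ) {ε : ℝ} (hε : 0 < ε) :
    ∀ᶠ m in atTop, ∀ᶠ i in l,
      dist (∫ ω, φ (X i ω) ∂P) (∫ ω, φ (taylorPoly m (X i ω)) ∂P) ≤ ε := by
  set η := ε / (4 * ‖φ‖ + 1)
  have hη : 0 < η := by positivity
  have hφη : 2 * ‖φ‖ * η ≤ ε / 2 := by
    rw [mul_div_assoc', div_le_div_iff₀ (by positivity) two_pos]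
    nlinarith [norm_nonneg φ]
  obtain ⟨K, hK, hXK⟩ := htight η hη
  have hunif := Metric.tendstoUniformlyOn_iff.mp
    ((tendstoUniformlyOn_taylorPoly hK.closure).comp_of_isCompact hK.closure
      (Set.mapsTo_id _) fun x _ => φ.continuous.continuousAt) (ε / 2) (half_pos hε)
  filter_upwards [hunif] with m hm
  filter_upwards [hXK] with i hi
  have hint {Z : Ω → HolD} (hZ : Measurable Z) : Integrable (fun ω => φ (Z ω)) P :=
    .of_bound (φ.continuous.measurable.comp hZ).aestronglyMeasurable ‖φ‖
      (Eventually.of_forall fun ω => φ.norm_coe_le_norm _)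
  have hcompl : P.real (X i ⁻¹' closure K)ᶜ ≤ η := ENNReal.toReal_le_of_le_ofReal hη.le <|
    (measure_mono (Set.preimage_mono (Set.compl_subset_compl.mpr subset_closure))).trans hi
  calc _ ≤ ε / 2 * P.real (X i ⁻¹' closure K) + 2 * ‖φ‖ * P.real (X i ⁻¹' closure K)ᶜ := by
        rw [dist_eq_norm]
        exact norm_integral_sub_integral_le (hint (hX i))
          (hint ((continuous_taylorPoly m).measurable.comp (hX i))) (fun _ => φ.norm_coe_le_norm _)
          (fun _ => φ.norm_coe_le_norm _) (hX i isClosed_closure.measurableSet)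
          fun ω hω => by simpa [dist_eq_norm] using (hm (X i ω) hω).le
    _ ≤ ε / 2 * 1 + 2 * ‖φ‖ * η := by gcongr; exact measureReal_le_one
    _ ≤ ε := by linarith

theorem tendsto_integral_of_tendsto_seqPrefix (hX : ∀ i, Measurable (X i))
    (htight : ∀ ε > 0, ∃ K, IsCompact K ∧ ∀ᶠ i in l, P (X i ⁻¹' Kᶜ) ≤ ENNReal.ofReal ε)
    {Y : Ω' → ℕ → ℂ} (hY : ∀ k, Measurable fun ω => Y ω k)
    (hXY : ∀ m, ∀ φ : (Fin (m + 1) → ℂ) →ᵇ ℝ,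
      Tendsto (fun i => ∫ ω, φ (seqPrefix m (X i ω).coeff) ∂P) l
        (𝓝 (∫ ω, φ (seqPrefix m (Y ω)) ∂P')))
    {G : Ω' → HolD} (hG : ∀ᵐ ω ∂P', (G ω).coeff = Y ω) (φ : HolD →ᵇ ℝ) :
    Tendsto (fun i => ∫ ω, φ (X i ω) ∂P) l (𝓝 (∫ ω, φ (G ω) ∂P')) := by
  refine tendsto_of_forall_eventually_dist_le
    (fun m => hXY m (φ.compContinuous ⟨poly m, continuous_poly m⟩)) ?_
    fun ε hε => eventually_dist_integral_taylorPoly_le hX htight φ hε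
  refine tendsto_integral_of_dominated_convergence (fun _ => ‖φ‖)
    (fun m => ((φ.continuous.comp (continuous_poly m)).measurable.comp
      (measurable_pi_lambda _ fun k => hY k)).aestronglyMeasurable)
    (integrable_const _) (fun m => Eventually.of_forall fun ω => φ.norm_coe_le_norm _) ?_
  filter_upwards [hG] with ω hω
  rw [← hω]
  exact (φ.continuous.tendsto _).comp (tendsto_taylorPoly (G ω))

end RandomElements

end HolD

/-- **Reduction to convergence of coefficients** (Lemma 3.2): if `{fₙ}` is a tight sequence of
random elements of `H(D)` whose Taylor coefficients at `0` converge jointly in law to a fixed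
sequence of random variables `{Q_m}`, then `f = ∑ Q_k z^k` is a.s. a well-defined element of
`H(D)` and `fₙ → f` in law in `H(D)`. -/
theorem tight_coefficient_convergence
    {Ω Ω' : Type*} [MeasurableSpace Ω] [MeasurableSpace Ω']
    (P : Measure Ω) [IsProbabilityMeasure P] (P' : Measure Ω') [IsProbabilityMeasure P']
    (f : ℕ → Ω → HolD)
    (hfmeas : ∀ n, Measurable (f n))
    -- tightness of `{fₙ}`
    (htight : ∀ ε : ℝ, 0 < ε → ∃ K : Set HolD, IsCompact K ∧
      ∀ n : ℕ, 1 ≤ n → 1 - ENNReal.ofReal ε < P {ω : Ω | f n ω ∈ K})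
    -- `c n k ω` is the `k`-th Taylor coefficient at `0` of `fₙ(ω)`
    (c : ℕ → ℕ → Ω → ℂ)
    (hcoeff : ∀ n : ℕ, ∀ ω : Ω, ∀ z ∈ ball (0 : ℂ) 1,
      (Summable fun k : ℕ => c n k ω * z ^ k) ∧ (f n ω).1 z = ∑' k : ℕ, c n k ω * z ^ k)
    -- the limiting coefficients `{Q_m}` and the joint convergence in law
    (Q : ℕ → Ω' → ℂ)
    (hQmeas : ∀ k, Measurable (Q k))
    (hconv : ∀ m : ℕ, ∀ φ : BoundedContinuousFunction (Fin (m + 1) → ℂ) ℝ,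
      Tendsto (fun n : ℕ => ∫ ω, φ (fun i : Fin (m + 1) => c n i.1 ω) ∂P) atTop
        (nhds (∫ ω, φ (fun i : Fin (m + 1) => Q i.1 ω) ∂P'))) :
    ∃ G : Ω' → HolD,
      (∀ᵐ ω ∂P', ∀ z ∈ ball (0 : ℂ) 1,
        (Summable fun k : ℕ => Q k ω * z ^ k) ∧ (G ω).1 z = ∑' k : ℕ, Q k ω * z ^ k) ∧
      ∀ φ : BoundedContinuousFunction HolD ℝ,
        Tendsto (fun n : ℕ => ∫ ω, φ (f n ω) ∂P) atTop (nhds (∫ ω, φ (G ω) ∂P')) := by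
  have hc (n : ℕ) (ω : Ω) : (fun k => c n k ω) = (f n ω).coeff :=
    HolD.coeff_eq_of_hasSum fun z hz => (hcoeff n ω z hz).2 ▸ (hcoeff n ω z hz).1.hasSum
  have htight' (ε : ℝ) (hε : 0 < ε) :
      ∃ K, IsCompact K ∧ ∀ᶠ n in atTop, P (f n ⁻¹' Kᶜ) ≤ ENNReal.ofReal ε := by
    obtain ⟨K, hK, hPK⟩ := htight ε hε
    refine ⟨closure K, hK.closure, eventually_atTop.mpr ⟨1, fun n hn => ?_⟩⟩
    rw [Set.preimage_compl, prob_compl_eq_one_sub (hfmeas n isClosed_closure.measurableSet),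
      tsub_le_iff_tsub_le]
    exact (hPK n hn).le.trans (measure_mono fun ω hω => subset_closure hω)
  have hfd (m : ℕ) (φ : (Fin (m + 1) → ℂ) →ᵇ ℝ) :
      Tendsto (fun n => ∫ ω, φ (seqPrefix m (f n ω).coeff) ∂P) atTop
        (𝓝 (∫ ω, φ (seqPrefix m fun k => Q k ω) ∂P')) := by
    simp_rw [← hc]
    exact hconv m φ
  let G (ω : Ω') : HolD := Function.invFun HolD.coeff fun k => Q k ω
  have hG : ∀ᵐ ω ∂P', (G ω).coeff = fun k => Q k ω :=
    (HolD.ae_exists_coeff_eq hfmeas htight' hQmeas hfd).mono fun ω => Function.invFun_eq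
  refine ⟨G, hG.mono fun ω hω z hz => ?_,
    HolD.tendsto_integral_of_tendsto_seqPrefix hfmeas htight' hQmeas hfd hG⟩
  have hsum := (G ω).hasSum_coeff hz
  rw [hω] at hsum
  exact ⟨hsum.summable, hsum.tsum_eq.symm⟩
end
end

section
/- For every n ≥ 1 and 1 ≤ k ≤ n, E[|P_k^{(n)}|²] = n^{−k}·n!/(n−k)! ≤ 1, and E[P_k^{(n)}·conj(P_l^{(n)})] = 0 whenever k ≠ l. -/
/-!
By the Leibniz formula, `P_k^{(n)}` is a sum over pairs `(I, σ)`, with `|I| = k` and `σ` a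
permutation of `I`, of `± n^{-k/2} ∏_{i ∈ I} a_{σ i, i}`. The monomial is indexed by the graph
`{(σ i, i)}` of `σ`, a `k`-element set of positions that determines `(I, σ)`. Monomials in distinct
independent centred entries of unit variance are orthonormal in `L²`, so `E[P_k conj P_l]` counts
the pairs common to both sums, each with weight `n^{-k}`: there are none if `k ≠ l`, and
`n!/(n-k)!` if `k = l`.
-/

open MeasureTheory ProbabilityTheory Filter

noncomputable section

/-- `P_k^{(n)} = ∑_{|I| = k} n^{-k/2} det(Aₙ(I))`, the sum over `k`-subsets `I ⊆ {1,…,n}` of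
the principal submatrix determinants, normalized by `n^{-k/2}`. -/
def Pcoef {Ω : Type*} (a : ℕ → ℕ → Ω → ℂ) (n k : ℕ) (ω : Ω) : ℂ :=
  ∑ I ∈ Finset.powersetCard k (Finset.univ : Finset (Fin n)),
    ((Real.sqrt n)⁻¹ : ℂ) ^ k * (Matrix.of fun i j : ↥I => a i.1.1 j.1.1 ω).det

open Finset
open scoped ComplexConjugate

namespace ProbabilityTheory

variable {Ω ι 𝕜 : Type*} [RCLike 𝕜] [MeasurableSpace Ω] {P : Measure Ω} {X : ι → Ω → 𝕜}

lemma iIndepFun.integrable_finsetProd (hX : iIndepFun X P) (hint : ∀ i, Integrable (X i) P)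
    (s : Finset ι) : Integrable (fun ω => ∏ i ∈ s, X i ω) P := by
  have := hX.isProbabilityMeasure
  induction s using Finset.cons_induction with
  | empty => simp
  | cons j s hj ih =>
    simp only [prod_cons]
    have hind := (hX.indepFun_finsetProd_of_notMem₀ (fun i => (hint i).aemeasurable) hj).symm
    simp only [← Finset.prod_apply] at ih ⊢
    exact hind.integrable_mul (hint j) ih

lemma iIndepFun.integral_finsetProd (hX : iIndepFun X P)
    (hm : ∀ i, AEStronglyMeasurable (X i) P) (s : Finset ι) :
    ∫ ω, ∏ i ∈ s, X i ω ∂P = ∏ i ∈ s, ∫ ω, X i ω ∂P := by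
  have hs := hX.precomp (g := ((↑) : s → ι)) Subtype.val_injective
  simp_rw [← Finset.prod_coe_sort s]
  exact hs.integral_fun_prod_eq_prod_integral fun i => hm i

def mulConjFactor [DecidableEq ι] (S T : Finset ι) (i : ι) (z : 𝕜) : 𝕜 :=
  (if i ∈ S then z else 1) * (if i ∈ T then conj z else 1)

section mulConjFactor

variable [DecidableEq ι] (S T : Finset ι) (i : ι)

lemma prod_mul_conj_prod_eq_prod_mulConjFactor (z : ι → 𝕜) :
    (∏ i ∈ S, z i) * conj (∏ i ∈ T, z i) = ∏ i ∈ S ∪ T, mulConjFactor S T i (z i) := by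
  simp only [mulConjFactor, prod_mul_distrib, prod_ite_mem, union_inter_cancel_left,
    union_inter_cancel_right, map_prod]

lemma measurable_mulConjFactor : Measurable (mulConjFactor (𝕜 := 𝕜) S T i) := by
  have := RCLike.continuous_conj (K := 𝕜)
  unfold mulConjFactor
  split_ifs <;> fun_prop

variable {S T i} {Y : Ω → 𝕜}

lemma integrable_mulConjFactor [IsFiniteMeasure P] (hY : MemLp Y 2 P) :
    Integrable (fun ω => mulConjFactor S T i (Y ω)) P := by
  have hconj : MemLp (fun ω => conj (Y ω)) 2 P := hY.star
  unfold mulConjFactor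
  refine MemLp.integrable_mul (p := 2) (q := 2) ?_ ?_ <;> split_ifs
  exacts [hY, memLp_const 1, hconj, memLp_const 1]

lemma integral_mulConjFactor [IsProbabilityMeasure P] (hmean : ∫ ω, Y ω ∂P = 0)
    (hvar : ∫ ω, ‖Y ω‖ ^ 2 ∂P = 1) :
    ∫ ω, mulConjFactor S T i (Y ω) ∂P = if (i ∈ S ↔ i ∈ T) then 1 else 0 := by
  by_cases hS : i ∈ S <;> by_cases hT : i ∈ T <;>
    simp only [mulConjFactor, hS, hT, if_true, if_false, mul_one, one_mul, iff_self,
      iff_true, iff_false, not_true]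
  · simp_rw [RCLike.mul_conj, ← RCLike.ofReal_pow, integral_ofReal, hvar, RCLike.ofReal_one]
  · exact hmean
  · rw [integral_conj, hmean, map_zero]
  · simp

end mulConjFactor

theorem integrable_prod_mul_conj_prod [DecidableEq ι] (hX : iIndepFun X P)
    (hL2 : ∀ i, MemLp (X i) 2 P) (S T : Finset ι) :
    Integrable (fun ω => (∏ i ∈ S, X i ω) * conj (∏ i ∈ T, X i ω)) P := by
  have := hX.isProbabilityMeasure
  simp_rw [prod_mul_conj_prod_eq_prod_mulConjFactor]
  exact (hX.comp _ fun i => measurable_mulConjFactor S T i).integrable_finsetProd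
    (fun i => integrable_mulConjFactor (hL2 i)) _

theorem integral_prod_mul_conj_prod [DecidableEq ι] (hX : iIndepFun X P)
    (hL2 : ∀ i, MemLp (X i) 2 P) (hmean : ∀ i, ∫ ω, X i ω ∂P = 0)
    (hvar : ∀ i, ∫ ω, ‖X i ω‖ ^ 2 ∂P = 1) (S T : Finset ι) :
    ∫ ω, (∏ i ∈ S, X i ω) * conj (∏ i ∈ T, X i ω) ∂P = if S = T then 1 else 0 := by
  have := hX.isProbabilityMeasure
  simp_rw [prod_mul_conj_prod_eq_prod_mulConjFactor]
  refine ((hX.comp _ fun i => measurable_mulConjFactor S T i).integral_finsetProd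
    (fun i => (integrable_mulConjFactor (hL2 i)).aestronglyMeasurable) _).trans ?_
  simp_rw [Function.comp_apply, integral_mulConjFactor (hmean _) (hvar _), prod_boole]
  congr 1
  simp only [Finset.ext_iff, mem_union, eq_iff_iff]
  grind

theorem integral_sum_mul_conj_sum {α : Type*} [DecidableEq ι] [DecidableEq α]
    (hX : iIndepFun X P) (hL2 : ∀ i, MemLp (X i) 2 P) (hmean : ∀ i, ∫ ω, X i ω ∂P = 0)
    (hvar : ∀ i, ∫ ω, ‖X i ω‖ ^ 2 ∂P = 1) {G : α → Finset ι} (hG : Function.Injective G)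
    (s t : Finset α) (v w : α → 𝕜) :
    ∫ ω, (∑ x ∈ s, v x * ∏ i ∈ G x, X i ω) * conj (∑ y ∈ t, w y * ∏ i ∈ G y, X i ω) ∂P
      = ∑ x ∈ s ∩ t, v x * conj (w x) := by
  have hint : ∀ x y, Integrable
      (fun ω => v x * conj (w y) * ((∏ i ∈ G x, X i ω) * conj (∏ i ∈ G y, X i ω))) P :=
    fun x y => (integrable_prod_mul_conj_prod hX hL2 _ _).const_mul _
  have hexpand : ∀ ω,
      (∑ x ∈ s, v x * ∏ i ∈ G x, X i ω) * conj (∑ y ∈ t, w y * ∏ i ∈ G y, X i ω)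
        = ∑ x ∈ s, ∑ y ∈ t,
            v x * conj (w y) * ((∏ i ∈ G x, X i ω) * conj (∏ i ∈ G y, X i ω)) := fun ω => by
    simp only [map_sum, sum_mul_sum, map_mul, mul_mul_mul_comm]
  simp_rw [hexpand]
  rw [integral_finsetSum _ fun x _ => integrable_finsetSum _ fun y _ => hint x y, ← sum_ite_mem]
  refine sum_congr rfl fun x _ => ?_
  rw [integral_finsetSum _ fun y _ => hint x y]
  simp_rw [integral_const_mul,
    integral_prod_mul_conj_prod hX hL2 hmean hvar, hG.eq_iff, mul_ite, mul_one, mul_zero,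
    sum_ite_eq]

end ProbabilityTheory

def permGraph {α : Type*} [DecidableEq α] {I : Finset α} (σ : Equiv.Perm I) : Finset (α × α) :=
  univ.image fun i => ((σ i : α), (i : α))

section permGraph

variable {α : Type*} [DecidableEq α] {I : Finset α}

lemma prod_permGraph {M : Type*} [CommMonoid M] (σ : Equiv.Perm I) (f : α × α → M) :
    ∏ p ∈ permGraph σ, f p = ∏ i, f ((σ i : α), (i : α)) :=
  prod_image fun _ _ _ _ h => Subtype.ext (congrArg Prod.snd h)

lemma image_snd_permGraph (σ : Equiv.Perm I) : (permGraph σ).image Prod.snd = I := by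
  ext x
  simp [permGraph]

lemma permGraph_injective :
    Function.Injective fun x : Σ I : Finset α, Equiv.Perm I => permGraph x.2 := by
  rintro ⟨I, σ⟩ ⟨J, τ⟩ h
  obtain rfl : I = J := by
    rw [← image_snd_permGraph σ, ← image_snd_permGraph τ]
    exact congrArg _ h
  suffices σ = τ by rw [this]
  ext i
  have hi : ((τ i : α), (i : α)) ∈ permGraph σ := by
    simp only at h
    rw [h]
    simp [permGraph]
  simpa [permGraph] using hi

end permGraph

def partialPerms (n k : ℕ) : Finset (Σ I : Finset (Fin n), Equiv.Perm I) :=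
  (powersetCard k univ).sigma fun _ => univ

lemma card_partialPerms (n k : ℕ) : (partialPerms n k).card = n.descFactorial k := by
  rw [partialPerms, card_sigma, sum_congr rfl fun I hI => by
    rw [card_univ, Fintype.card_perm, Fintype.card_coe, (mem_powersetCard.mp hI).2]]
  simp [Nat.descFactorial_eq_factorial_mul_choose, mul_comm]

lemma disjoint_partialPerms {n k l : ℕ} (h : k ≠ l) :
    Disjoint (partialPerms n k) (partialPerms n l) := by
  rw [disjoint_left]
  rintro ⟨I, σ⟩ hk hl
  simp only [partialPerms, mem_sigma, mem_powersetCard] at hk hl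
  exact h (hk.1.2.symm.trans hl.1.2)

lemma Pcoef_eq_sum {Ω : Type*} (a : ℕ → ℕ → Ω → ℂ) (n k : ℕ) (ω : Ω) :
    Pcoef a n k ω = ∑ x ∈ partialPerms n k,
      ((Real.sqrt n)⁻¹ : ℂ) ^ k * x.2.sign * ∏ p ∈ permGraph x.2, a p.1 p.2 ω := by
  rw [Pcoef, partialPerms, sum_sigma]
  refine sum_congr rfl fun I _ => ?_
  simp only [Matrix.det_apply, Matrix.of_apply, mul_sum, prod_permGraph, Units.smul_def,
    zsmul_eq_mul, mul_assoc]

lemma sqrt_inv_pow_mul_sign_mul_conj {β : Type*} [DecidableEq β] [Fintype β] (n k : ℕ)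
    (σ : Equiv.Perm β) :
    ((Real.sqrt n)⁻¹ : ℂ) ^ k * σ.sign * conj (((Real.sqrt n)⁻¹ : ℂ) ^ k * σ.sign)
      = ((n : ℂ)⁻¹) ^ k := by
  rw [Complex.mul_conj']
  simp only [norm_mul, norm_pow, norm_inv, Complex.norm_real, Complex.norm_intCast,
    abs_unit_intCast, Real.norm_of_nonneg (Real.sqrt_nonneg _), mul_one]
  rw [← Complex.ofReal_pow, ← pow_mul, mul_comm, pow_mul, inv_pow,
    Real.sq_sqrt (Nat.cast_nonneg n)]
  push_cast
  rfl

section Pcoef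

variable {Ω : Type*} [MeasurableSpace Ω] {P : Measure Ω} {a : ℕ → ℕ → Ω → ℂ}

theorem integral_Pcoef_mul_conj (hindep : iIndepFun (fun p : ℕ × ℕ => a p.1 p.2) P)
    (hident : ∀ i j, IdentDistrib (a i j) (a 0 0) P P) (hL2 : MemLp (a 0 0) 2 P)
    (hmean : ∫ ω, a 0 0 ω ∂P = 0) (hvar : ∫ ω, ‖a 0 0 ω‖ ^ 2 ∂P = 1) (n k l : ℕ) :
    ∫ ω, Pcoef a n k ω * conj (Pcoef a n l ω) ∂P
      = if k = l then ((n : ℂ)⁻¹) ^ k * n.descFactorial k else 0 := by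
  have hX : iIndepFun (fun p : Fin n × Fin n => a p.1 p.2) P :=
    hindep.precomp (g := fun p : Fin n × Fin n => ((p.1 : ℕ), (p.2 : ℕ)))
      fun p q h => by simpa [Prod.ext_iff, Fin.ext_iff] using h
  simp_rw [Pcoef_eq_sum]
  rw [integral_sum_mul_conj_sum hX (fun p => (hident _ _).symm.memLp_snd hL2)
    (fun p => (hident _ _).integral_eq.trans hmean)
    (fun p => ((hident _ _).comp (measurable_norm.pow_const 2)).integral_eq.trans hvar)
    permGraph_injective]
  split_ifs with hkl
  · subst hkl
    simp_rw [inter_self, sqrt_inv_pow_mul_sign_mul_conj, sum_const, card_partialPerms,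
      nsmul_eq_mul, mul_comm]
  · rw [disjoint_iff_inter_eq_empty.mp (disjoint_partialPerms hkl), sum_empty]

theorem integral_norm_Pcoef_sq (hindep : iIndepFun (fun p : ℕ × ℕ => a p.1 p.2) P)
    (hident : ∀ i j, IdentDistrib (a i j) (a 0 0) P P) (hL2 : MemLp (a 0 0) 2 P)
    (hmean : ∫ ω, a 0 0 ω ∂P = 0) (hvar : ∫ ω, ‖a 0 0 ω‖ ^ 2 ∂P = 1) (n k : ℕ) :
    ∫ ω, ‖Pcoef a n k ω‖ ^ 2 ∂P = ((n : ℝ)⁻¹) ^ k * n.descFactorial k := by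
  apply Complex.ofReal_injective
  rw [← integral_complex_ofReal]
  push_cast
  simp_rw [← Complex.mul_conj']
  rw [integral_Pcoef_mul_conj hindep hident hL2 hmean hvar, if_pos rfl]

end Pcoef

theorem Pcoef_moments_general
    {Ω : Type*} [MeasurableSpace Ω] (P : Measure Ω)
    (a : ℕ → ℕ → Ω → ℂ)
    (hindep : iIndepFun (fun p : ℕ × ℕ => a p.1 p.2) P)
    (hident : ∀ i j, IdentDistrib (a i j) (a 0 0) P P)
    (hL2 : MemLp (a 0 0) 2 P)
    (hmean : ∫ ω, a 0 0 ω ∂P = 0)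
    (hvar : ∫ ω, ‖a 0 0 ω‖ ^ 2 ∂P = 1)
    (n k : ℕ) (hkn : k ≤ n) :
    (∫ ω, ‖Pcoef a n k ω‖ ^ 2 ∂P
        = ((n : ℝ)⁻¹) ^ k * ((Nat.factorial n : ℝ) / (Nat.factorial (n - k) : ℝ))) ∧
    (((n : ℝ)⁻¹) ^ k * ((Nat.factorial n : ℝ) / (Nat.factorial (n - k) : ℝ)) ≤ 1) ∧
    (∀ l : ℕ, k ≠ l → ∫ ω, Pcoef a n k ω * (starRingEnd ℂ) (Pcoef a n l ω) ∂P = 0) := by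
  have hdesc : (n.factorial : ℝ) / (n - k).factorial = n.descFactorial k := by
    rw [Nat.descFactorial_eq_div hkn,
      Nat.cast_div (Nat.factorial_dvd_factorial (Nat.sub_le n k)) (by positivity)]
  refine ⟨?_, ?_, fun l hkl => ?_⟩
  · rw [hdesc, integral_norm_Pcoef_sq hindep hident hL2 hmean hvar]
  · rw [hdesc, inv_pow]
    exact inv_mul_le_one_of_le₀ (mod_cast Nat.descFactorial_le_pow n k) (by positivity)
  · rw [integral_Pcoef_mul_conj hindep hident hL2 hmean hvar, if_neg hkl]

/-- **Second moments of the determinantal coefficients**: for i.i.d. entries with mean `0` and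
variance `1`, for `1 ≤ k ≤ n` one has `E[|P_k^{(n)}|²] = n^{-k} n!/(n-k)! ≤ 1`, and
`E[P_k^{(n)} conj(P_l^{(n)})] = 0` for `k ≠ l`. -/
theorem Pcoef_moments
    {Ω : Type*} [MeasurableSpace Ω] (P : Measure Ω) [IsProbabilityMeasure P]
    (a : ℕ → ℕ → Ω → ℂ)
    (hmeas : ∀ i j, Measurable (a i j))
    (hindep : iIndepFun (fun p : ℕ × ℕ => a p.1 p.2) P)
    (hident : ∀ i j, IdentDistrib (a i j) (a 0 0) P P)
    (hL2 : MemLp (a 0 0) 2 P)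
    (hmean : ∫ ω, a 0 0 ω ∂P = 0)
    (hvar : ∫ ω, ‖a 0 0 ω‖ ^ 2 ∂P = 1)
    (n k : ℕ) (hk : 1 ≤ k) (hkn : k ≤ n) :
    (∫ ω, ‖Pcoef a n k ω‖ ^ 2 ∂P
        = ((n : ℝ)⁻¹) ^ k * ((Nat.factorial n : ℝ) / (Nat.factorial (n - k) : ℝ))) ∧
    (((n : ℝ)⁻¹) ^ k * ((Nat.factorial n : ℝ) / (Nat.factorial (n - k) : ℝ)) ≤ 1) ∧
    (∀ l : ℕ, k ≠ l → ∫ ω, Pcoef a n k ω * (starRingEnd ℂ) (Pcoef a n l ω) ∂P = 0) :=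
  Pcoef_moments_general P a hindep hident hL2 hmean hvar n k hkn

end
end

section
/- For every k ≥ 1, every n ≥ k and every M ≥ 1, E[|P_k^{(n,M)} − P_k^{(n)}|²] ≤ E[|a_{11}^{(M)}·a_{12}^{(M)}·⋯·a_{1k}^{(M)} − a_{11}·a_{12}·⋯·a_{1k}|²]; moreover this bound tends to 0 as M → ∞. -/
open MeasureTheory ProbabilityTheory Filter

noncomputable section

/-- The truncated entry `a^{(M)} = a 1_{|a| < M} - E[a 1_{|a| < M}]`. -/
def trunc {Ω : Type*} [MeasurableSpace Ω] (P : Measure Ω) (a : ℕ → ℕ → Ω → ℂ) (M : ℝ)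
    (i j : ℕ) (ω : Ω) : ℂ :=
  (if ‖a i j ω‖ < M then a i j ω else 0)
    - ∫ ω', (if ‖a i j ω'‖ < M then a i j ω' else 0) ∂P

/-!
By the Leibniz formula, `P_k^{(n,M)} - P_k^{(n)}` is the sum over pairs `(I, σ)`, `|I| = k`, of
`n^{-k/2} sgn σ · D_E`, where `E = {(σ i, i)}` is the set of positions used by `σ` and
`D_E = ∏_{e ∈ E} a_e^{(M)} - ∏_{e ∈ E} a_e`. Distinct pairs give distinct sets `E` of size `k`;
as the entries are independent and centred (before and after truncation), `D_E ⟂ D_{E'}` in `L²`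
for `E ≠ E'`, while `E|D_E|²` only depends on `|E|`. So the left side equals
`n(n-1)⋯(n-k+1) / n^k · E|D_{E₀}|²` for `E₀` the first `k` entries of the first row.
The bound `E|D_{E₀}|²` tends to `0` by dominated convergence: `a^{(M)} → a` pointwise,
`|a^{(M)}| ≤ |a| + E|a|`, and a product of independent square-integrable variables is square
integrable.
-/

open scoped ComplexConjugate Topology

section L2

variable {Ω : Type*} [MeasurableSpace Ω] {P : Measure Ω}

lemma MeasureTheory.MemLp.integrable_mul_conj {f g : Ω → ℂ} (hf : MemLp f 2 P)
    (hg : MemLp g 2 P) : Integrable (fun ω => f ω * conj (g ω)) P :=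
  hf.integrable_mul (q := 2) hg.star

lemma ofReal_integral_norm_sq (f : Ω → ℂ) :
    ((∫ ω, ‖f ω‖ ^ 2 ∂P : ℝ) : ℂ) = ∫ ω, f ω * conj (f ω) ∂P := by
  rw [← integral_complex_ofReal]
  simp [Complex.mul_conj']

lemma integral_sub_mul_conj_sub {A B A' B' : Ω → ℂ} (hA : MemLp A 2 P) (hB : MemLp B 2 P)
    (hA' : MemLp A' 2 P) (hB' : MemLp B' 2 P) :
    ∫ ω, (A ω - B ω) * conj (A' ω - B' ω) ∂P
      = (∫ ω, A ω * conj (A' ω) ∂P) - (∫ ω, A ω * conj (B' ω) ∂P)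
        - (∫ ω, B ω * conj (A' ω) ∂P) + ∫ ω, B ω * conj (B' ω) ∂P := by
  have hexpand : ∀ ω, (A ω - B ω) * conj (A' ω - B' ω)
      = A ω * conj (A' ω) - A ω * conj (B' ω) - B ω * conj (A' ω) + B ω * conj (B' ω) := by
    intro ω; rw [map_sub]; ring
  have h₁ := hA.integrable_mul_conj hA'
  have h₂ := hA.integrable_mul_conj hB'
  have h₃ := hB.integrable_mul_conj hA'
  have h₄ := hB.integrable_mul_conj hB'
  simp_rw [hexpand]
  rw [integral_add, integral_sub, integral_sub]
  exacts [h₁, h₂, h₁.sub h₂, h₃, (h₁.sub h₂).sub h₃, h₄]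

lemma integral_norm_sq_sum_of_orthogonal {κ : Type*} (s : Finset κ) {D : κ → Ω → ℂ}
    (hD : ∀ i ∈ s, MemLp (D i) 2 P)
    (horth : ∀ i ∈ s, ∀ j ∈ s, i ≠ j → ∫ ω, D i ω * conj (D j ω) ∂P = 0) :
    ∫ ω, ‖∑ i ∈ s, D i ω‖ ^ 2 ∂P = ∑ i ∈ s, ∫ ω, ‖D i ω‖ ^ 2 ∂P := by
  apply Complex.ofReal_injective
  simp_rw [Complex.ofReal_sum, ofReal_integral_norm_sq, map_sum, Finset.sum_mul_sum]
  rw [integral_finsetSum _ fun i hi => integrable_finsetSum _ fun j hj =>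
    (hD i hi).integrable_mul_conj (hD j hj)]
  refine Finset.sum_congr rfl fun i hi => ?_
  rw [integral_finsetSum _ fun j hj => (hD i hi).integrable_mul_conj (hD j hj),
    Finset.sum_eq_single i (fun j hj hji => horth i hi j hj hji.symm) (absurd hi)]

end L2

namespace ProbabilityTheory.iIndepFun

variable {Ω ι : Type*} [MeasurableSpace Ω] {P : Measure Ω} {X : ι → Ω → ℂ}

lemma integral_finsetProd_s15 (hX : iIndepFun X P) (hmeas : ∀ i, Measurable (X i))
    (s : Finset ι) : ∫ ω, ∏ i ∈ s, X i ω ∂P = ∏ i ∈ s, ∫ ω, X i ω ∂P := by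
  rw [← Finset.prod_coe_sort, ← (hX.precomp Subtype.val_injective)
    |>.integral_fun_prod_eq_prod_integral fun i => (hmeas i).aestronglyMeasurable]
  exact integral_congr_ae (ae_of_all _ fun ω => (Finset.prod_coe_sort s fun i => X i ω).symm)

lemma integrable_finsetProd_s15 (hX : iIndepFun X P) (hmeas : ∀ i, Measurable (X i))
    {s : Finset ι} (hint : ∀ i ∈ s, Integrable (X i) P) :
    Integrable (fun ω => ∏ i ∈ s, X i ω) P := by
  classical
  have := hX.isProbabilityMeasure
  induction s using Finset.induction_on with
  | empty => simp
  | insert i s hi ih =>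
    have hrest : Integrable (∏ j ∈ s, X j) P := by
      rw [Finset.prod_fn]
      exact ih fun j hj => hint j (Finset.mem_insert_of_mem hj)
    simp_rw [Finset.prod_insert hi]
    exact (hX.indepFun_finsetProd_of_notMem hmeas hi).symm.integrable_mul
      (hint i (Finset.mem_insert_self i s)) hrest |>.congr (ae_of_all _ fun ω => by simp)

lemma memLp_two_finsetProd (hX : iIndepFun X P) (hmeas : ∀ i, Measurable (X i))
    {s : Finset ι} (hL2 : ∀ i ∈ s, MemLp (X i) 2 P) :
    MemLp (fun ω => ∏ i ∈ s, X i ω) 2 P := by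
  have hint : Integrable (fun ω => ∏ i ∈ s, X i ω * conj (X i ω)) P :=
    (hX.comp (fun _ z => z * conj z) fun _ => by fun_prop).integrable_finsetProd_s15
      (fun i => by fun_prop) fun i hi => (hL2 i hi).integrable_mul_conj (hL2 i hi)
  rw [memLp_two_iff_integrable_sq_norm
    (Finset.measurable_prod s fun i _ => hmeas i).aestronglyMeasurable]
  refine hint.norm.congr (ae_of_all _ fun ω => ?_)
  simp [Complex.mul_conj', Finset.prod_pow]

end ProbabilityTheory.iIndepFun

section IdenticallyDistributed

variable {Ω ι : Type*} [MeasurableSpace Ω] {P : Measure Ω} {X : ι → Ω → ℂ} {Y : Ω → ℂ}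
  {u v : ℂ → ℂ}

lemma integral_prod_mul_conj_prod [DecidableEq ι] (hX : iIndepFun X P)
    (hmeas : ∀ i, Measurable (X i)) (hu : Measurable u) (hv : Measurable v) (E E' : Finset ι) :
    ∫ ω, (∏ e ∈ E, u (X e ω)) * conj (∏ e ∈ E', v (X e ω)) ∂P
      = ∏ e ∈ E ∪ E', ∫ ω, (if e ∈ E then u (X e ω) else 1)
          * conj (if e ∈ E' then v (X e ω) else 1) ∂P := by
  set ψ : ι → ℂ → ℂ := fun e z => (if e ∈ E then u z else 1) * conj (if e ∈ E' then v z else 1)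
  have hψ : ∀ e, Measurable (ψ e) := fun e => by
    simp only [ψ]
    split_ifs <;> fun_prop
  have hprod : ∀ ω, (∏ e ∈ E, u (X e ω)) * conj (∏ e ∈ E', v (X e ω))
      = ∏ e ∈ E ∪ E', ψ e (X e ω) := fun ω => by
    simp only [ψ, Finset.prod_mul_distrib, ← map_prod, Finset.prod_ite_mem,
      Finset.union_inter_cancel_left, Finset.union_inter_cancel_right]
  simp_rw [hprod]
  exact (hX.comp ψ hψ).integral_finsetProd_s15 (fun e => (hψ e).comp (hmeas e)) _

variable (hX : iIndepFun X P) (hmeas : ∀ i, Measurable (X i))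
  (hident : ∀ i, IdentDistrib (X i) Y P P)
include hX hmeas hident

lemma integral_prod_mul_conj_prod_self (hu : Measurable u) (hv : Measurable v) (E : Finset ι) :
    ∫ ω, (∏ e ∈ E, u (X e ω)) * conj (∏ e ∈ E, v (X e ω)) ∂P
      = (∫ ω, u (Y ω) * conj (v (Y ω)) ∂P) ^ E.card := by
  classical
  rw [integral_prod_mul_conj_prod hX hmeas hu hv, Finset.union_self, ← Finset.prod_const]
  refine Finset.prod_congr rfl fun e he => ?_
  simp only [he, if_true]
  exact ((hident e).comp (by fun_prop : Measurable fun z => u z * conj (v z))).integral_eq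

lemma integral_prod_mul_conj_prod_of_ne (hu : Measurable u) (hv : Measurable v)
    (hu₀ : ∫ ω, u (Y ω) ∂P = 0) {E E' : Finset ι} (hcard : E.card = E'.card) (hne : E ≠ E') :
    ∫ ω, (∏ e ∈ E, u (X e ω)) * conj (∏ e ∈ E', v (X e ω)) ∂P = 0 := by
  classical
  obtain ⟨e, heE, heE'⟩ : ∃ e ∈ E, e ∉ E' := by
    by_contra! h
    exact hne (Finset.eq_of_subset_of_card_le h hcard.ge)
  rw [integral_prod_mul_conj_prod hX hmeas hu hv]
  refine Finset.prod_eq_zero (Finset.mem_union_left _ heE) ?_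
  simp only [heE, heE', if_true, if_false, map_one, mul_one]
  rw [← hu₀]
  exact ((hident e).comp hu).integral_eq

lemma memLp_two_prod_comp (hu : Measurable u) (huY : MemLp (fun ω => u (Y ω)) 2 P)
    (E : Finset ι) : MemLp (fun ω => ∏ e ∈ E, u (X e ω)) 2 P :=
  (hX.comp (fun _ => u) fun _ => hu).memLp_two_finsetProd (fun e => hu.comp (hmeas e))
    fun e _ => ((hident e).comp hu).symm.memLp_snd huY

def prodDiff (u : ℂ → ℂ) (X : ι → Ω → ℂ) (E : Finset ι) (ω : Ω) : ℂ :=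
  ∏ e ∈ E, u (X e ω) - ∏ e ∈ E, X e ω

lemma memLp_prodDiff (hY : MemLp Y 2 P) (hu : Measurable u) (huY : MemLp (fun ω => u (Y ω)) 2 P)
    (E : Finset ι) : MemLp (prodDiff u X E) 2 P :=
  (memLp_two_prod_comp hX hmeas hident hu huY E).sub
    (memLp_two_prod_comp hX hmeas hident measurable_id' hY E)

lemma ofReal_integral_norm_sq_prodDiff (hY : MemLp Y 2 P) (hu : Measurable u)
    (huY : MemLp (fun ω => u (Y ω)) 2 P) (E : Finset ι) :
    ((∫ ω, ‖prodDiff u X E ω‖ ^ 2 ∂P : ℝ) : ℂ)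
      = (∫ ω, u (Y ω) * conj (u (Y ω)) ∂P) ^ E.card - (∫ ω, u (Y ω) * conj (Y ω) ∂P) ^ E.card
        - (∫ ω, Y ω * conj (u (Y ω)) ∂P) ^ E.card + (∫ ω, Y ω * conj (Y ω) ∂P) ^ E.card := by
  have h₁ := integral_prod_mul_conj_prod_self hX hmeas hident hu hu E
  have h₂ := integral_prod_mul_conj_prod_self hX hmeas hident hu measurable_id' E
  have h₃ := integral_prod_mul_conj_prod_self hX hmeas hident measurable_id' hu E
  have h₄ := integral_prod_mul_conj_prod_self hX hmeas hident measurable_id' measurable_id' E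
  rw [ofReal_integral_norm_sq, ← h₁, ← h₂, ← h₃, ← h₄]
  exact integral_sub_mul_conj_sub (memLp_two_prod_comp hX hmeas hident hu huY E)
    (memLp_two_prod_comp hX hmeas hident measurable_id' hY E)
    (memLp_two_prod_comp hX hmeas hident hu huY E)
    (memLp_two_prod_comp hX hmeas hident measurable_id' hY E)

lemma integral_prodDiff_mul_conj_of_ne (hY : MemLp Y 2 P) (hY₀ : ∫ ω, Y ω ∂P = 0)
    (hu : Measurable u) (huY : MemLp (fun ω => u (Y ω)) 2 P) (hu₀ : ∫ ω, u (Y ω) ∂P = 0)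
    {E E' : Finset ι} (hcard : E.card = E'.card) (hne : E ≠ E') :
    ∫ ω, prodDiff u X E ω * conj (prodDiff u X E' ω) ∂P = 0 := by
  have hu' := memLp_two_prod_comp hX hmeas hident hu huY
  have hid := memLp_two_prod_comp hX hmeas hident measurable_id' hY
  unfold prodDiff
  rw [integral_sub_mul_conj_sub (hu' E) (hid E) (hu' E') (hid E'),
    integral_prod_mul_conj_prod_of_ne hX hmeas hident hu hu hu₀ hcard hne,
    integral_prod_mul_conj_prod_of_ne hX hmeas hident hu measurable_id' hu₀ hcard hne,
    integral_prod_mul_conj_prod_of_ne hX hmeas hident measurable_id' hu hY₀ hcard hne,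
    integral_prod_mul_conj_prod_of_ne hX hmeas hident measurable_id' measurable_id' hY₀ hcard hne]
  ring

end IdenticallyDistributed

section DominatedConvergence

variable {Ω ι : Type*} [MeasurableSpace Ω] {P : Measure Ω} {X : ι → Ω → ℂ} {Y : Ω → ℂ}

lemma tendsto_integral_norm_sq_prodDiff (hX : iIndepFun X P) (hmeas : ∀ i, Measurable (X i))
    (hident : ∀ i, IdentDistrib (X i) Y P P) (hY : MemLp Y 2 P) {α : Type*} {l : Filter α}
    [l.IsCountablyGenerated] {w : α → ℂ → ℂ} (hw : ∀ M, Measurable (w M)) {C : ℝ} (hC : 0 ≤ C)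
    (hbound : ∀ M z, ‖w M z‖ ≤ ‖z‖ + C) (hlim : ∀ z, Tendsto (fun M => w M z) l (𝓝 z))
    (s : Finset ι) :
    Tendsto (fun M => ∫ ω, ‖prodDiff (w M) X s ω‖ ^ 2 ∂P) l (𝓝 0) := by
  have := hX.isProbabilityMeasure
  set G : ℂ → ℂ := fun z => ((‖z‖ + C : ℝ) : ℂ)
  have hG := memLp_two_prod_comp hX hmeas hident (by fun_prop : Measurable G)
    (hY.norm.add (memLp_const C)).ofReal s
  have hdom : ∀ M ω, ‖prodDiff (w M) X s ω‖ ^ 2 ≤ 4 * ‖∏ e ∈ s, G (X e ω)‖ ^ 2 := by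
    intro M ω
    have hnormG : ‖∏ e ∈ s, G (X e ω)‖ = ∏ e ∈ s, (‖X e ω‖ + C) := by
      simp only [G, norm_prod, Complex.norm_real, Real.norm_eq_abs]
      exact Finset.prod_congr rfl fun e _ => abs_of_nonneg (by positivity)
    have hw_le : ‖∏ e ∈ s, w M (X e ω)‖ ≤ ∏ e ∈ s, (‖X e ω‖ + C) := by
      rw [norm_prod]
      exact Finset.prod_le_prod (fun _ _ => norm_nonneg _) fun e _ => hbound M _
    have hX_le : ‖∏ e ∈ s, X e ω‖ ≤ ∏ e ∈ s, (‖X e ω‖ + C) := by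
      rw [norm_prod]
      exact Finset.prod_le_prod (fun _ _ => norm_nonneg _) fun e _ => le_add_of_nonneg_right hC
    have hsub := norm_sub_le (∏ e ∈ s, w M (X e ω)) (∏ e ∈ s, X e ω)
    rw [hnormG]
    unfold prodDiff
    nlinarith [norm_nonneg (∏ e ∈ s, w M (X e ω) - ∏ e ∈ s, X e ω)]
  have hlim' : ∀ ω, Tendsto (fun M => ‖prodDiff (w M) X s ω‖ ^ 2) l (𝓝 0) := by
    intro ω
    have h := (tendsto_finsetProd s fun e _ => hlim (X e ω)).sub_const (∏ e ∈ s, X e ω)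
    simpa [prodDiff] using h.norm.pow 2
  simpa using tendsto_integral_filter_of_dominated_convergence
    (fun ω => 4 * ‖∏ e ∈ s, G (X e ω)‖ ^ 2)
    (Eventually.of_forall fun M => by unfold prodDiff; fun_prop)
    (Eventually.of_forall fun M => ae_of_all _ fun ω => by simpa using hdom M ω)
    (((memLp_two_iff_integrable_sq_norm hG.1).mp hG).const_mul 4) (ae_of_all _ hlim')

end DominatedConvergence

section Cutoff

def cutoff (M : ℝ) (z : ℂ) : ℂ := if ‖z‖ < M then z else 0

lemma measurable_cutoff (M : ℝ) : Measurable (cutoff M) :=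
  Measurable.ite (measurableSet_lt measurable_norm measurable_const) measurable_id measurable_const

lemma norm_cutoff_le (M : ℝ) (z : ℂ) : ‖cutoff M z‖ ≤ ‖z‖ := by
  unfold cutoff
  split_ifs <;> simp

lemma cutoff_eventuallyEq (z : ℂ) : (fun M => cutoff M z) =ᶠ[atTop] fun _ => z :=
  (eventually_gt_atTop ‖z‖).mono fun _ hM => if_pos hM

variable {Ω : Type*} [MeasurableSpace Ω] (P : Measure Ω) (Y : Ω → ℂ)

def centeredCutoff (M : ℝ) (z : ℂ) : ℂ := cutoff M z - ∫ ω, cutoff M (Y ω) ∂P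

variable {P Y}

lemma trunc_eq_centeredCutoff {a : ℕ → ℕ → Ω → ℂ}
    (hident : ∀ i j, IdentDistrib (a i j) (a 0 0) P P) (M : ℝ) : trunc P a M = fun i j ω => centeredCutoff P (a 0 0) M (a i j ω) := by
  ext i j ω
  exact congrArg (cutoff M (a i j ω) - ·) ((hident i j).comp (measurable_cutoff M)).integral_eq

lemma measurable_centeredCutoff (M : ℝ) : Measurable (centeredCutoff P Y M) :=
  (measurable_cutoff M).sub_const _

lemma norm_centeredCutoff_le (hY : Integrable Y P) (M : ℝ) (z : ℂ) :
    ‖centeredCutoff P Y M z‖ ≤ ‖z‖ + ∫ ω, ‖Y ω‖ ∂P :=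
  (norm_sub_le _ _).trans (add_le_add (norm_cutoff_le M z)
    (norm_integral_le_of_norm_le hY.norm (ae_of_all _ fun ω => norm_cutoff_le M (Y ω))))

lemma tendsto_centeredCutoff (hY : Integrable Y P) (hY₀ : ∫ ω, Y ω ∂P = 0) (z : ℂ) :
    Tendsto (fun M => centeredCutoff P Y M z) atTop (𝓝 z) := by
  have hmean : Tendsto (fun M => ∫ ω, cutoff M (Y ω) ∂P) atTop (𝓝 0) := by
    rw [← hY₀]
    exact tendsto_integral_filter_of_dominated_convergence (fun ω => ‖Y ω‖)
      (Eventually.of_forall fun M =>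
        ((measurable_cutoff M).comp_aemeasurable hY.1.aemeasurable).aestronglyMeasurable)
      (Eventually.of_forall fun M => ae_of_all _ fun ω => norm_cutoff_le M (Y ω)) hY.norm
      (ae_of_all _ fun ω => tendsto_const_nhds.congr' (cutoff_eventuallyEq (Y ω)).symm)
  simpa [centeredCutoff] using (tendsto_const_nhds.congr' (cutoff_eventuallyEq z).symm).sub hmean

variable [IsProbabilityMeasure P]

lemma memLp_centeredCutoff (hY : MemLp Y 2 P) (M : ℝ) :
    MemLp (fun ω => centeredCutoff P Y M (Y ω)) 2 P :=
  (hY.of_le ((measurable_cutoff M).comp_aemeasurable hY.1.aemeasurable).aestronglyMeasurable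
    (ae_of_all _ fun ω => norm_cutoff_le M (Y ω))).sub (memLp_const _)

lemma integral_centeredCutoff (hY : Integrable Y P) (M : ℝ) :
    ∫ ω, centeredCutoff P Y M (Y ω) ∂P = 0 := by
  have hint : Integrable (fun ω => cutoff M (Y ω)) P :=
    hY.mono ((measurable_cutoff M).comp_aemeasurable hY.1.aemeasurable).aestronglyMeasurable
      (ae_of_all _ fun ω => norm_cutoff_le M (Y ω))
  unfold centeredCutoff
  rw [integral_sub hint (integrable_const _), integral_const, probReal_univ, one_smul, sub_self]

end Cutoff

section PrincipalMinors

variable {n : ℕ}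

def permPairs (n k : ℕ) : Finset (Σ I : Finset (Fin n), Equiv.Perm I) :=
  (Finset.powersetCard k Finset.univ).sigma fun _ => Finset.univ

/-- The position `(σ i, i)` of the entry contributed by `i` to the term of `σ` in the Leibniz
expansion of `det (A(I))`. -/
@[simps]
def permEntry (p : Σ I : Finset (Fin n), Equiv.Perm I) : p.1 ↪ ℕ × ℕ where
  toFun i := (((p.2 i : p.1) : Fin n).val, (i : Fin n).val)
  inj' _ _ h := Subtype.ext (Fin.val_injective (congrArg Prod.snd h))

def permEntries (p : Σ I : Finset (Fin n), Equiv.Perm I) : Finset (ℕ × ℕ) :=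
  Finset.univ.map (permEntry p)

def permWeight (n k : ℕ) (p : Σ I : Finset (Fin n), Equiv.Perm I) : ℂ :=
  ((Real.sqrt n)⁻¹ : ℂ) ^ k * ((Equiv.Perm.sign p.2 : ℤ) : ℂ)

lemma card_permPairs (k : ℕ) : (permPairs n k).card = n.descFactorial k := by
  rw [permPairs, Finset.card_sigma, Finset.sum_congr rfl fun I hI => by
    rw [Finset.card_univ, Fintype.card_perm, Fintype.card_coe, (Finset.mem_powersetCard.mp hI).2],
    Finset.sum_const, Finset.card_powersetCard, Finset.card_univ, Fintype.card_fin, smul_eq_mul,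
    Nat.descFactorial_eq_factorial_mul_choose, mul_comm]

lemma card_permEntries {k : ℕ} {p : Σ I : Finset (Fin n), Equiv.Perm I}
    (hp : p ∈ permPairs n k) : (permEntries p).card = k := by
  simpa [permEntries] using (Finset.mem_powersetCard.mp (Finset.mem_sigma.mp hp).1).2

lemma permEntries_injective : Function.Injective (permEntries (n := n)) := by
  have hcols : ∀ p : Σ I : Finset (Fin n), Equiv.Perm I,
      (permEntries p).image Prod.snd = p.1.map Fin.valEmbedding := by
    intro p
    ext x
    simp [permEntries]
  rintro ⟨I, σ⟩ ⟨J, τ⟩ h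
  obtain rfl : I = J :=
    Finset.map_injective Fin.valEmbedding (by rw [← hcols ⟨I, σ⟩, ← hcols ⟨J, τ⟩, h])
  obtain rfl : σ = τ := by
    ext i
    have hi : ((σ i : Fin n).val, (i : Fin n).val) ∈ permEntries ⟨I, τ⟩ := by
      rw [← h]
      exact Finset.mem_map_of_mem _ (Finset.mem_univ i)
    obtain ⟨j, -, hj⟩ := Finset.mem_map.mp hi
    change ((τ j : Fin n).val, (j : Fin n).val) = ((σ i : Fin n).val, (i : Fin n).val) at hj
    simp only [Prod.mk.injEq] at hj
    obtain rfl : j = i := Subtype.ext (Fin.ext hj.2)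
    exact hj.1.symm
  rfl

lemma norm_permWeight_sq (k : ℕ) (p : Σ I : Finset (Fin n), Equiv.Perm I) :
    ‖permWeight n k p‖ ^ 2 = ((n : ℝ) ^ k)⁻¹ := by
  have hsign : ‖((Equiv.Perm.sign p.2 : ℤ) : ℂ)‖ = 1 := by
    rcases Int.units_eq_one_or (Equiv.Perm.sign p.2) with h | h <;> simp [h]
  rw [permWeight, norm_mul, hsign, mul_one, norm_pow, norm_inv, Complex.norm_real,
    Real.norm_of_nonneg (Real.sqrt_nonneg _), ← pow_mul, mul_comm, pow_mul, inv_pow,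
    Real.sq_sqrt (Nat.cast_nonneg n), inv_pow]

lemma Pcoef_eq_sum_permPairs {Ω : Type*} (f : ℕ → ℕ → Ω → ℂ) (k : ℕ) (ω : Ω) :
    Pcoef f n k ω = ∑ p ∈ permPairs n k, permWeight n k p * ∏ e ∈ permEntries p, f e.1 e.2 ω := by
  rw [permPairs, Finset.sum_sigma, Pcoef]
  refine Finset.sum_congr rfl fun I _ => ?_
  rw [Matrix.det_apply, Finset.mul_sum]
  refine Finset.sum_congr rfl fun σ _ => ?_
  rw [permEntries, Finset.prod_map, permWeight, Units.smul_def, zsmul_eq_mul, mul_assoc]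
  rfl

lemma Pcoef_comp_sub_Pcoef {Ω : Type*} (a : ℕ → ℕ → Ω → ℂ) (u : ℂ → ℂ) (k : ℕ) (ω : Ω) :
    Pcoef (fun i j ω => u (a i j ω)) n k ω - Pcoef a n k ω
      = ∑ p ∈ permPairs n k,
          permWeight n k p * prodDiff u (fun e : ℕ × ℕ => a e.1 e.2) (permEntries p) ω := by
  simp only [Pcoef_eq_sum_permPairs, ← Finset.sum_sub_distrib, ← mul_sub, prodDiff]

end PrincipalMinors

section TruncationEstimate

variable {Ω : Type*} [MeasurableSpace Ω] {P : Measure Ω} {a : ℕ → ℕ → Ω → ℂ} {u : ℂ → ℂ}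

lemma iIndepFun_row (hindep : iIndepFun (fun p : ℕ × ℕ => a p.1 p.2) P) (i k : ℕ) :
    iIndepFun (fun j : Fin k => a i j) P :=
  hindep.precomp (g := fun j : Fin k => (i, j.val)) fun _ _ h => Fin.ext (congrArg Prod.snd h)

lemma integral_norm_sq_Pcoef_comp_sub (hmeas : ∀ i j, Measurable (a i j))
    (hindep : iIndepFun (fun p : ℕ × ℕ => a p.1 p.2) P)
    (hident : ∀ i j, IdentDistrib (a i j) (a 0 0) P P) (hL2 : MemLp (a 0 0) 2 P)
    (hmean : ∫ ω, a 0 0 ω ∂P = 0) (hu : Measurable u)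
    (huL2 : MemLp (fun ω => u (a 0 0 ω)) 2 P) (hu₀ : ∫ ω, u (a 0 0 ω) ∂P = 0) (n k : ℕ) :
    ∫ ω, ‖Pcoef (fun i j ω => u (a i j ω)) n k ω - Pcoef a n k ω‖ ^ 2 ∂P
      = n.descFactorial k / (n : ℝ) ^ k
          * ∫ ω, ‖∏ j : Fin k, u (a 0 j ω) - ∏ j : Fin k, a 0 j ω‖ ^ 2 ∂P := by
  set X : ℕ × ℕ → Ω → ℂ := fun e => a e.1 e.2
  have hXmeas : ∀ e, Measurable (X e) := fun e => hmeas e.1 e.2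
  have hXident : ∀ e, IdentDistrib (X e) (a 0 0) P P := fun e => hident e.1 e.2
  have hterm : ∀ p ∈ permPairs n k,
      ∫ ω, ‖permWeight n k p * prodDiff u X (permEntries p) ω‖ ^ 2 ∂P
        = ((n : ℝ) ^ k)⁻¹ * ∫ ω, ‖prodDiff u (fun j : Fin k => a 0 j) Finset.univ ω‖ ^ 2 ∂P := by
    intro p hp
    have hcard : (permEntries p).card = (Finset.univ : Finset (Fin k)).card := by
      rw [card_permEntries hp, Finset.card_univ, Fintype.card_fin]
    simp_rw [norm_mul, mul_pow, norm_permWeight_sq]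
    rw [integral_const_mul]
    congr 1
    apply Complex.ofReal_injective
    rw [ofReal_integral_norm_sq_prodDiff hindep hXmeas hXident hL2 hu huL2,
      ofReal_integral_norm_sq_prodDiff (iIndepFun_row hindep 0 k) (fun j => hmeas 0 j) (fun j => hident 0 j) hL2 hu
        huL2, hcard]
  simp_rw [Pcoef_comp_sub_Pcoef]
  rw [integral_norm_sq_sum_of_orthogonal, Finset.sum_congr rfl hterm, Finset.sum_const,
    card_permPairs, nsmul_eq_mul, div_eq_mul_inv, mul_assoc]
  · rfl
  · exact fun p _ => (memLp_prodDiff hindep hXmeas hXident hL2 hu huL2 _).const_mul _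
  · intro p hp q hq hpq
    simp_rw [map_mul, mul_mul_mul_comm]
    rw [integral_const_mul, integral_prodDiff_mul_conj_of_ne hindep hXmeas hXident hL2 hmean hu
      huL2 hu₀ ((card_permEntries hp).trans (card_permEntries hq).symm) (permEntries_injective.ne hpq), mul_zero]

end TruncationEstimate

theorem Pcoef_truncation_L2_bound_general
    {Ω : Type*} [MeasurableSpace Ω] (P : Measure Ω) [IsProbabilityMeasure P]
    (a : ℕ → ℕ → Ω → ℂ)
    (hmeas : ∀ i j, Measurable (a i j))
    (hindep : iIndepFun (fun p : ℕ × ℕ => a p.1 p.2) P)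
    (hident : ∀ i j, IdentDistrib (a i j) (a 0 0) P P)
    (hL2 : MemLp (a 0 0) 2 P)
    (hmean : ∫ ω, a 0 0 ω ∂P = 0)
    (k : ℕ) :
    (∀ n : ℕ, k ≤ n → ∀ M : ℝ, 1 ≤ M →
      ∫ ω, ‖Pcoef (trunc P a M) n k ω - Pcoef a n k ω‖ ^ 2 ∂P
        ≤ ∫ ω, ‖(∏ j : Fin k, trunc P a M 0 j.1 ω) - ∏ j : Fin k, a 0 j.1 ω‖ ^ 2 ∂P) ∧
    Tendsto
      (fun M : ℝ =>
        ∫ ω, ‖(∏ j : Fin k, trunc P a M 0 j.1 ω) - ∏ j : Fin k, a 0 j.1 ω‖ ^ 2 ∂P)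
      atTop (nhds 0) := by
  have hint : Integrable (a 0 0) P := hL2.integrable one_le_two
  simp_rw [trunc_eq_centeredCutoff hident]
  refine ⟨fun n _ M _ => ?_, ?_⟩
  · rw [integral_norm_sq_Pcoef_comp_sub hmeas hindep hident hL2 hmean
      (measurable_centeredCutoff M) (memLp_centeredCutoff hL2 M) (integral_centeredCutoff hint M)]
    refine mul_le_of_le_one_left (integral_nonneg fun _ => sq_nonneg _) ?_
    exact div_le_one_of_le₀ (by exact_mod_cast Nat.descFactorial_le_pow n k) (by positivity)
  · exact tendsto_integral_norm_sq_prodDiff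
      (iIndepFun_row hindep 0 k)
      (fun j => hmeas 0 j) (fun j => hident 0 j) hL2 measurable_centeredCutoff
      (integral_nonneg fun _ => norm_nonneg _) (norm_centeredCutoff_le hint)
      (tendsto_centeredCutoff hint hmean) Finset.univ

/-- **L² bound for the truncation error** (proof of Lemma 3.3): for every `k ≥ 1`, `n ≥ k`
and `M ≥ 1`, `E[|P_k^{(n,M)} - P_k^{(n)}|²] ≤ E[|a₁₁^{(M)} ⋯ a₁ₖ^{(M)} - a₁₁ ⋯ a₁ₖ|²]`, and
this bound tends to `0` as `M → ∞`. -/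
theorem Pcoef_truncation_L2_bound
    {Ω : Type*} [MeasurableSpace Ω] (P : Measure Ω) [IsProbabilityMeasure P]
    (a : ℕ → ℕ → Ω → ℂ)
    (hmeas : ∀ i j, Measurable (a i j))
    (hindep : iIndepFun (fun p : ℕ × ℕ => a p.1 p.2) P)
    (hident : ∀ i j, IdentDistrib (a i j) (a 0 0) P P)
    (hL2 : MemLp (a 0 0) 2 P)
    (hmean : ∫ ω, a 0 0 ω ∂P = 0)
    (hvar : ∫ ω, ‖a 0 0 ω‖ ^ 2 ∂P = 1)
    (k : ℕ) (hk : 1 ≤ k) :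
    (∀ n : ℕ, k ≤ n → ∀ M : ℝ, 1 ≤ M →
      ∫ ω, ‖Pcoef (trunc P a M) n k ω - Pcoef a n k ω‖ ^ 2 ∂P
        ≤ ∫ ω, ‖(∏ j : Fin k, trunc P a M 0 j.1 ω) - ∏ j : Fin k, a 0 j.1 ω‖ ^ 2 ∂P) ∧
    Tendsto
      (fun M : ℝ =>
        ∫ ω, ‖(∏ j : Fin k, trunc P a M 0 j.1 ω) - ∏ j : Fin k, a 0 j.1 ω‖ ^ 2 ∂P)
      atTop (nhds 0) :=
  Pcoef_truncation_L2_bound_general P a hmeas hindep hident hL2 hmean k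

end
end

section
/- Assume additionally that |a_{11}| ≤ M almost surely for some constant M > 0. Then for every k ≥ 1 there is a constant C_k, depending only on k, such that Var(r_k^{(n)}) = E[|r_k^{(n)} − E[r_k^{(n)}]|²] ≤ 4·C_k·M^{2k}·n^{k−1} for all n ≥ 1. In particular Var(r_k^{(n)}/n^{k/2}) → 0 as n → ∞. -/
/-!
Write `r_k^{(n)} = ∑_f X_f` over the degenerate closed walks `f`, where `X_f` is the product of
the entries along the edges of `f`. The variance is the sum of the covariances of the pairs
`(X_f, X_g)`, and by independence and centring a covariance vanishes unless `f` and `g` share an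
edge and every edge is traversed at least twice by the two walks together. Such a pair traverses
at most `k` distinct edges, and every vertex it visits is the tail of one of them. With `k`
vertices every vertex would have a single out-edge, so `g` would follow the edges of `f` and stay
among the fewer than `k` vertices of `f`. Hence the pair visits at most `k - 1` vertices: there
are at most `(k - 1)^{2k} n^{k - 1}` such pairs, and each covariance is at most `4 M^{2k}`.
-/

open MeasureTheory ProbabilityTheory Filter

noncomputable section

/-- `r_k^{(n)}`: the sum of `a_{i₁i₂} a_{i₂i₃} ⋯ a_{i_k i₁}` over all `k`-tuples
`(i₁, …, i_k) ∈ {1,…,n}^k` whose set of entries has cardinality strictly less than `k`. -/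
def rsum {Ω : Type*} (a : ℕ → ℕ → Ω → ℂ) (k n : ℕ) (ω : Ω) : ℂ :=
  ∑ f ∈ Finset.univ.filter
      (fun f : Fin k → Fin n => (Finset.image f Finset.univ).card < k),
    ∏ l : Fin k, a (f l).1 (f (finRotate k l)).1 ω

open Finset ComplexConjugate

section Combinatorics

variable {α β : Type*}

theorem two_mul_card_image_le_of_not_existsUnique [Fintype α] [DecidableEq β] (u : α → β)
    (h : ∀ b, ¬ ∃! a, u a = b) : 2 * #(univ.image u) ≤ Fintype.card α := by
  rw [← card_univ, card_eq_sum_card_image u univ, mul_comm, ← smul_eq_mul, ← sum_const]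
  refine sum_le_sum fun b hb => ?_
  obtain ⟨a, -, rfl⟩ := mem_image.1 hb
  obtain ⟨a', ha', hne⟩ : ∃ a', u a' = u a ∧ a' ≠ a := by
    by_contra! H
    exact h (u a) ⟨a, rfl, H⟩
  exact one_lt_card_iff.2 ⟨a', a, by simp [ha'], by simp, hne⟩

theorem card_filter_card_image_le [Fintype α] [DecidableEq α] [Fintype β] [DecidableEq β]
    [Nonempty β] (m : ℕ) :
    #{h : α → β | #(univ.image h) ≤ m} ≤ m ^ Fintype.card α * Fintype.card β ^ m := by
  calc #{h : α → β | #(univ.image h) ≤ m}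
      ≤ #(univ.image fun p : (α → Fin m) × (Fin m → β) => p.2 ∘ p.1) := card_le_card ?_
    _ ≤ Fintype.card ((α → Fin m) × (Fin m → β)) := card_image_le.trans_eq card_univ
    _ = m ^ Fintype.card α * Fintype.card β ^ m := by simp
  intro h hh
  set s := univ.image h
  have hs : #s ≤ m := (mem_filter.1 hh).2
  let c : α → Fin m := fun a => Fin.castLE hs (s.equivFin ⟨h a, mem_image_of_mem h (mem_univ a)⟩)
  have hc : h.FactorsThrough c := fun a b hab => by
    simpa [c, Fin.castLE_inj, Subtype.ext_iff] using hab
  refine mem_image.2 ⟨(c, Function.extend c h fun _ => Classical.arbitrary β), mem_univ _, ?_⟩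
  funext a
  exact hc.extend_apply (fun _ => Classical.arbitrary β) a

variable {k : ℕ}

def walkEdge (f : Fin k → β) (l : Fin k) : β × β := (f l, f (finRotate k l))

theorem forall_of_finRotate_invariant {p : Fin k → Prop} (hp : ∀ l, p l → p (finRotate k l))
    {l₀ : Fin k} (h₀ : p l₀) (l : Fin k) : p l := by
  have := l₀.neZero
  have hl : l = (finRotate k)^[(l - l₀).val] l₀ := by
    rw [← finCycle_eq_finRotate_iterate, finCycle_apply, add_sub_cancel]
  rw [hl]
  exact Function.Iterate.rec p h₀ hp _

def CorrelatedWalks (f g : Fin k → β) : Prop :=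
  ¬ Disjoint (Set.range (walkEdge f)) (Set.range (walkEdge g)) ∧
    ∀ e, ¬ ∃! x, Sum.elim (walkEdge f) (walkEdge g) x = e

theorem CorrelatedWalks.card_image_sumElim_lt [DecidableEq β] {f g : Fin k → β}
    (h : CorrelatedWalks f g) (hf : #(univ.image f) < k) : #(univ.image (Sum.elim f g)) < k := by
  obtain ⟨hshare, hmult⟩ := h
  set E := univ.image (Sum.elim (walkEdge f) (walkEdge g))
  have hE : #E ≤ k := by
    have h2 : 2 * #E ≤ Fintype.card (Fin k ⊕ Fin k) :=
      two_mul_card_image_le_of_not_existsUnique _ hmult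
    rw [Fintype.card_sum, Fintype.card_fin] at h2
    omega
  have hV : univ.image (Sum.elim f g) = E.image Prod.fst := by
    rw [image_image]
    congr 1
    funext x
    cases x <;> rfl
  by_contra! hlarge
  -- `#E ≤ k ≤ #(E.image Prod.fst)`: every vertex is the tail of exactly one edge in `E`.
  have hinj : Set.InjOn Prod.fst (E : Set (β × β)) :=
    card_image_iff.1 (le_antisymm card_image_le (hE.trans (hV ▸ hlarge)))
  have hgf : ∀ l, g l ∈ univ.image f := by
    obtain ⟨_, ⟨l₁, hl⟩, ⟨l₁', rfl⟩⟩ := Set.not_disjoint_iff.1 hshare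
    refine forall_of_finRotate_invariant (fun l hl => ?_) (l₀ := l₁') ?_
    · obtain ⟨j, -, hj⟩ := mem_image.1 hl
      have hedge : walkEdge f j = walkEdge g l :=
        hinj (mem_image_of_mem _ (mem_univ (Sum.inl j)))
          (mem_image_of_mem _ (mem_univ (Sum.inr l))) hj
      exact mem_image.2 ⟨_, mem_univ _, (Prod.ext_iff.1 hedge).2⟩
    · exact mem_image.2 ⟨l₁, mem_univ _, (Prod.ext_iff.1 hl).1⟩
  have hsub : univ.image (Sum.elim f g) ⊆ univ.image f := by
    intro x hx
    obtain ⟨(l | l), -, rfl⟩ := mem_image.1 hx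
    exacts [mem_image_of_mem _ (mem_univ l), hgf l]
  exact absurd (hlarge.trans (card_le_card hsub)) (not_le.2 hf)

theorem card_le_of_correlatedWalks [Fintype β] [DecidableEq β] [Nonempty β]
    {t : Finset ((Fin k → β) × (Fin k → β))}
    (ht : ∀ p ∈ t, #(univ.image p.1) < k ∧ CorrelatedWalks p.1 p.2) :
    #t ≤ (k - 1) ^ (2 * k) * Fintype.card β ^ (k - 1) := by
  calc #t ≤ #{h : Fin k ⊕ Fin k → β | #(univ.image h) ≤ k - 1} := by
        refine card_le_card_of_injOn (fun p => Sum.elim p.1 p.2) (fun p hp => ?_) ?_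
        · obtain ⟨hdeg, hcorr⟩ := ht p hp
          exact mem_filter.2 ⟨mem_univ _, Nat.le_sub_one_of_lt (hcorr.card_image_sumElim_lt hdeg)⟩
        · intro p _ q _ h
          exact Prod.ext (funext fun l => congrFun h (.inl l)) (funext fun l => congrFun h (.inr l))
    _ ≤ (k - 1) ^ Fintype.card (Fin k ⊕ Fin k) * Fintype.card β ^ (k - 1) :=
        card_filter_card_image_le _
    _ = (k - 1) ^ (2 * k) * Fintype.card β ^ (k - 1) := by simp [two_mul]

end Combinatorics

section Covariance

variable {Ω : Type*} [MeasurableSpace Ω]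

def complexCov (U V : Ω → ℂ) (P : Measure Ω) : ℂ :=
  ∫ ω, (U ω - ∫ ω', U ω' ∂P) * conj (V ω - ∫ ω', V ω' ∂P) ∂P

variable {P : Measure Ω}

theorem complexCov_comm (U V : Ω → ℂ) : complexCov V U P = conj (complexCov U V P) := by
  simp only [complexCov, ← integral_conj, map_mul, Complex.conj_conj, mul_comm]

theorem complexCov_mul_eq_zero {T R V : Ω → ℂ} (h : IndepFun T (fun ω => (R ω, V ω)) P)
    (hT : ∫ ω, T ω ∂P = 0) (hTm : AEStronglyMeasurable T P) (hRm : AEStronglyMeasurable R P)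
    (hVm : AEStronglyMeasurable V P) : complexCov (fun ω => T ω * R ω) V P = 0 := by
  have hTR : ∫ ω, T ω * R ω ∂P = 0 := by
    have hTR : IndepFun T R P := h.comp measurable_id measurable_fst
    rw [hTR.integral_fun_mul_eq_mul_integral hTm hRm, hT, zero_mul]
  have h' : IndepFun T (fun ω => R ω * conj (V ω - ∫ ω', V ω' ∂P)) P :=
    h.comp measurable_id
      (measurable_fst.mul (Complex.continuous_conj.measurable.comp (measurable_snd.sub_const _)))
  simp only [complexCov, hTR, sub_zero, mul_assoc]
  rw [h'.integral_fun_mul_eq_mul_integral hTm (by fun_prop), hT, zero_mul]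

theorem integral_norm_div_sub_sq (X : Ω → ℂ) (c : ℂ) :
    ∫ ω, ‖X ω / c - ∫ ω', X ω' / c ∂P‖ ^ 2 ∂P = (∫ ω, ‖X ω - ∫ ω', X ω' ∂P‖ ^ 2 ∂P) / ‖c‖ ^ 2 := by
  simp_rw [integral_div, div_sub_div_same, norm_div, div_pow]
  exact integral_div _ _

variable [IsProbabilityMeasure P]

-- This holds for non-integrable `U` too, where both integrals are `0`.
theorem integral_sub_integral_eq_zero (U : Ω → ℂ) : ∫ ω, (U ω - ∫ ω', U ω' ∂P) ∂P = 0 := by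
  by_cases hU : Integrable U P
  · simp [integral_sub hU (integrable_const _)]
  · simp [integral_undef hU]

theorem ProbabilityTheory.IndepFun.complexCov_eq_zero {U V : Ω → ℂ} (h : IndepFun U V P)
    (hU : AEStronglyMeasurable U P) (hV : AEStronglyMeasurable V P) : complexCov U V P = 0 := by
  have h' : IndepFun (fun ω => U ω - ∫ ω', U ω' ∂P) (fun ω => conj (V ω - ∫ ω', V ω' ∂P)) P :=
    h.comp (measurable_id.sub_const _)
      (Complex.continuous_conj.measurable.comp (measurable_id.sub_const _))
  rw [complexCov, h'.integral_fun_mul_eq_mul_integral (by fun_prop) (by fun_prop)]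
  simp [integral_sub_integral_eq_zero]

theorem norm_complexCov_le {U V : Ω → ℂ} {B B' : ℝ} (hU : ∀ᵐ ω ∂P, ‖U ω‖ ≤ B)
    (hV : ∀ᵐ ω ∂P, ‖V ω‖ ≤ B') : ‖complexCov U V P‖ ≤ 4 * (B * B') := by
  have hcentre : ∀ {W : Ω → ℂ} {B : ℝ}, (∀ᵐ ω ∂P, ‖W ω‖ ≤ B) →
      ∀ᵐ ω ∂P, ‖W ω - ∫ ω', W ω' ∂P‖ ≤ 2 * B := fun {W B} hW => by
    have hmean : ‖∫ ω, W ω ∂P‖ ≤ B := by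
      simpa using norm_integral_le_of_norm_le_const hW
    filter_upwards [hW] with ω hω
    linarith [norm_sub_le (W ω) (∫ ω', W ω' ∂P)]
  have hprod : ∀ᵐ ω ∂P, ‖(U ω - ∫ ω', U ω' ∂P) * conj (V ω - ∫ ω', V ω' ∂P)‖
      ≤ 2 * B * (2 * B') := by
    filter_upwards [hcentre hU, hcentre hV] with ω hUω hVω
    rw [norm_mul, RCLike.norm_conj]
    exact mul_le_mul hUω hVω (norm_nonneg _) ((norm_nonneg _).trans hUω)
  calc ‖complexCov U V P‖ ≤ 2 * B * (2 * B') :=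
        (norm_integral_le_of_norm_le_const hprod).trans_eq (by simp)
    _ = 4 * (B * B') := by ring

theorem ofReal_integral_norm_sum_sub_sq {α : Type*} {s : Finset α} {X : α → Ω → ℂ}
    (hX : ∀ i ∈ s, MemLp (X i) 2 P) :
    ((∫ ω, ‖∑ i ∈ s, X i ω - ∫ ω', ∑ i ∈ s, X i ω' ∂P‖ ^ 2 ∂P : ℝ) : ℂ)
      = ∑ i ∈ s, ∑ j ∈ s, complexCov (X i) (X j) P := by
  have hcentred : ∀ i ∈ s, MemLp (fun ω => X i ω - ∫ ω', X i ω' ∂P) 2 P :=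
    fun i hi => (hX i hi).sub (memLp_const _)
  have hint : ∀ i ∈ s, ∀ j ∈ s, Integrable
      (fun ω => (X i ω - ∫ ω', X i ω' ∂P) * conj (X j ω - ∫ ω', X j ω' ∂P)) P :=
    fun i hi j hj => (hcentred i hi).integrable_mul (hcentred j hj).star
  have hsum : ∀ ω, ∑ i ∈ s, X i ω - ∫ ω', ∑ i ∈ s, X i ω' ∂P
      = ∑ i ∈ s, (X i ω - ∫ ω', X i ω' ∂P) := fun ω => by
    rw [integral_finsetSum s fun i hi => (hX i hi).integrable one_le_two, sum_sub_distrib]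
  rw [← integral_complex_ofReal]
  simp_rw [Complex.ofReal_pow, ← Complex.mul_conj', hsum, map_sum, sum_mul_sum]
  rw [integral_finsetSum _ fun i hi => integrable_finsetSum _ (hint i hi)]
  exact sum_congr rfl fun i hi => integral_finsetSum _ (hint i hi)

theorem integral_norm_sum_sub_sq_le {α : Type*} {s : Finset α} {X : α → Ω → ℂ}
    (hX : ∀ i ∈ s, MemLp (X i) 2 P) {t : Finset (α × α)} (ht : t ⊆ s ×ˢ s)
    (hzero : ∀ p ∈ s ×ˢ s, p ∉ t → complexCov (X p.1) (X p.2) P = 0) {B : ℝ}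
    (hB : ∀ p ∈ t, ‖complexCov (X p.1) (X p.2) P‖ ≤ B) :
    ∫ ω, ‖∑ i ∈ s, X i ω - ∫ ω', ∑ i ∈ s, X i ω' ∂P‖ ^ 2 ∂P ≤ #t * B := by
  calc ∫ ω, ‖∑ i ∈ s, X i ω - ∫ ω', ∑ i ∈ s, X i ω' ∂P‖ ^ 2 ∂P
      = ‖((∫ ω, ‖∑ i ∈ s, X i ω - ∫ ω', ∑ i ∈ s, X i ω' ∂P‖ ^ 2 ∂P : ℝ) : ℂ)‖ := by
        rw [Complex.norm_real, Real.norm_of_nonneg (integral_nonneg fun _ => by positivity)]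
    _ = ‖∑ p ∈ t, complexCov (X p.1) (X p.2) P‖ := by
        rw [ofReal_integral_norm_sum_sub_sq hX, ← sum_product', sum_subset ht hzero]
    _ ≤ ∑ p ∈ t, ‖complexCov (X p.1) (X p.2) P‖ := norm_sum_le _ _
    _ ≤ #t * B := by simpa using sum_le_card_nsmul t _ B hB

end Covariance

section Words

variable {Ω ι α β : Type*} [MeasurableSpace Ω] {P : Measure Ω} {Y : ι → Ω → ℂ}
  [Fintype α] [Fintype β]

theorem ProbabilityTheory.iIndepFun.indepFun_of_disjoint_range (hY : iIndepFun Y P)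
    (hmeas : ∀ i, Measurable (Y i)) {v : α → ι} {w : β → ι}
    (h : Disjoint (Set.range v) (Set.range w)) :
    IndepFun (fun ω a => Y (v a) ω) (fun ω b => Y (w b) ω) P := by
  classical
  have hST : Disjoint (univ.image v) (univ.image w) := by
    simpa [← disjoint_coe] using h
  exact (hY.indepFun_finset _ _ hST hmeas).comp
    (φ := fun x a => x ⟨v a, mem_image_of_mem v (mem_univ a)⟩)
    (ψ := fun x b => x ⟨w b, mem_image_of_mem w (mem_univ b)⟩)
    (measurable_pi_lambda _ fun _ => measurable_pi_apply _)
    (measurable_pi_lambda _ fun _ => measurable_pi_apply _)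

theorem ae_norm_prod_le {M : ℝ} (hbound : ∀ i, ∀ᵐ ω ∂P, ‖Y i ω‖ ≤ M) (v : α → ι) :
    ∀ᵐ ω ∂P, ‖∏ a, Y (v a) ω‖ ≤ M ^ Fintype.card α := by
  filter_upwards [ae_all_iff.2 fun a => hbound (v a)] with ω hω
  rw [norm_prod, ← card_univ, ← prod_const]
  exact prod_le_prod (fun _ _ => norm_nonneg _) fun a _ => hω a

theorem complexCov_prod_eq_zero_of_unique_left (hY : iIndepFun Y P)
    (hmeas : ∀ i, Measurable (Y i)) (hmean : ∀ i, ∫ ω, Y i ω ∂P = 0) {v : α → ι} {w : β → ι}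
    {a₀ : α} (ha₀ : ∀ x, Sum.elim v w x = v a₀ → x = Sum.inl a₀) :
    complexCov (fun ω => ∏ a, Y (v a) ω) (fun ω => ∏ b, Y (w b) ω) P = 0 := by
  classical
  have hdisj : Disjoint (Set.range fun _ : Unit => v a₀)
      (Set.range (Sum.elim (fun a : {a // a ≠ a₀} => v a) w)) := by
    rw [Set.disjoint_left]
    rintro _ ⟨_, rfl⟩ ⟨⟨a, ha⟩ | b, hx⟩
    · exact ha (Sum.inl_injective (ha₀ (Sum.inl a) hx))
    · exact Sum.inr_ne_inl (ha₀ (Sum.inr b) hx)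
  have hind := (hY.indepFun_of_disjoint_range hmeas hdisj).comp (measurable_pi_apply ())
    (ψ := fun x => (∏ a, x (Sum.inl a), ∏ b, x (Sum.inr b))) (by fun_prop)
  simp_rw [Fintype.prod_eq_mul_prod_subtype_ne _ a₀]
  exact complexCov_mul_eq_zero hind (hmean _) (by fun_prop) (by fun_prop) (by fun_prop)

variable [IsProbabilityMeasure P]

theorem complexCov_prod_eq_zero_of_disjoint (hY : iIndepFun Y P) (hmeas : ∀ i, Measurable (Y i))
    {v : α → ι} {w : β → ι} (h : Disjoint (Set.range v) (Set.range w)) :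
    complexCov (fun ω => ∏ a, Y (v a) ω) (fun ω => ∏ b, Y (w b) ω) P = 0 :=
  IndepFun.complexCov_eq_zero
    ((hY.indepFun_of_disjoint_range hmeas h).comp (φ := fun x : α → ℂ => ∏ a, x a)
      (ψ := fun x : β → ℂ => ∏ b, x b) (by fun_prop) (by fun_prop))
    (by fun_prop) (by fun_prop)

theorem complexCov_prod_eq_zero (hY : iIndepFun Y P) (hmeas : ∀ i, Measurable (Y i))
    (hmean : ∀ i, ∫ ω, Y i ω ∂P = 0) {v : α → ι} {w : β → ι}
    (h : Disjoint (Set.range v) (Set.range w) ∨ ∃ i, ∃! x, Sum.elim v w x = i) :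
    complexCov (fun ω => ∏ a, Y (v a) ω) (fun ω => ∏ b, Y (w b) ω) P = 0 := by
  obtain h | ⟨i, (a₀ | b₀), rfl, hx⟩ := h
  · exact complexCov_prod_eq_zero_of_disjoint hY hmeas h
  · exact complexCov_prod_eq_zero_of_unique_left hY hmeas hmean hx
  · rw [complexCov_comm, complexCov_prod_eq_zero_of_unique_left hY hmeas hmean
      (fun x hx' => by rw [← Sum.swap_swap x, hx x.swap (by cases x <;> exact hx')]; rfl),
      map_zero]

end Words

section Rsum

variable {Ω : Type*} [MeasurableSpace Ω] {P : Measure Ω} [IsProbabilityMeasure P]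

theorem integral_norm_sum_prod_walkEdge_sub_sq_le {β : Type*} [Fintype β] [DecidableEq β]
    [Nonempty β] {Y : β × β → Ω → ℂ} (hY : iIndepFun Y P) (hmeas : ∀ e, Measurable (Y e))
    (hmean : ∀ e, ∫ ω, Y e ω ∂P = 0) {M : ℝ} (hbound : ∀ e, ∀ᵐ ω ∂P, ‖Y e ω‖ ≤ M) (k : ℕ) :
    ∫ ω, ‖∑ f ∈ {f : Fin k → β | #(univ.image f) < k}, ∏ l, Y (walkEdge f l) ω
        - ∫ ω', ∑ f ∈ {f : Fin k → β | #(univ.image f) < k}, ∏ l, Y (walkEdge f l) ω' ∂P‖ ^ 2 ∂P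
      ≤ 4 * ((k - 1) ^ (2 * k) : ℕ) * M ^ (2 * k) * (Fintype.card β : ℝ) ^ (k - 1) := by
  classical
  set A : Finset (Fin k → β) := {f | #(univ.image f) < k}
  set X : (Fin k → β) → Ω → ℂ := fun f ω => ∏ l, Y (walkEdge f l) ω
  have hXbound : ∀ f, ∀ᵐ ω ∂P, ‖X f ω‖ ≤ M ^ k := fun f => by
    simpa only [Fintype.card_fin] using ae_norm_prod_le hbound (walkEdge f)
  have hX : ∀ f ∈ A, MemLp (X f) 2 P := fun f _ => MemLp.of_bound (by fun_prop) _ (hXbound f)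
  have hcount : #{p ∈ A ×ˢ A | CorrelatedWalks p.1 p.2}
      ≤ (k - 1) ^ (2 * k) * Fintype.card β ^ (k - 1) :=
    card_le_of_correlatedWalks fun p hp => by
      simp only [A, mem_filter, mem_product, mem_univ, true_and] at hp
      exact ⟨hp.1.1, hp.2⟩
  calc _ ≤ #{p ∈ A ×ˢ A | CorrelatedWalks p.1 p.2} * (4 * (M ^ k * M ^ k)) :=
        integral_norm_sum_sub_sq_le hX (filter_subset _ _)
          (fun p hp hpt => complexCov_prod_eq_zero hY hmeas hmean (by
            rw [mem_filter, not_and, CorrelatedWalks, not_and_or, not_not, not_forall_not] at hpt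
            exact hpt hp))
          (fun p _ => norm_complexCov_le (hXbound _) (hXbound _))
    _ ≤ ((k - 1) ^ (2 * k) * Fintype.card β ^ (k - 1) : ℕ) * (4 * (M ^ k * M ^ k)) :=
        mul_le_mul_of_nonneg_right (by exact_mod_cast hcount)
          (mul_nonneg zero_le_four (mul_self_nonneg _))
    _ = 4 * ((k - 1) ^ (2 * k) : ℕ) * M ^ (2 * k) * (Fintype.card β : ℝ) ^ (k - 1) := by
        push_cast
        ring

theorem integral_norm_rsum_sub_sq_le {a : ℕ → ℕ → Ω → ℂ} (hmeas : ∀ i j, Measurable (a i j))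
    (hindep : iIndepFun (fun p : ℕ × ℕ => a p.1 p.2) P)
    (hident : ∀ i j, IdentDistrib (a i j) (a 0 0) P P) (hmean : ∫ ω, a 0 0 ω ∂P = 0)
    {M : ℝ} (hbound : ∀ᵐ ω ∂P, ‖a 0 0 ω‖ ≤ M) (k : ℕ) {n : ℕ} (hn : 1 ≤ n) :
    ∫ ω, ‖rsum a k n ω - ∫ ω', rsum a k n ω' ∂P‖ ^ 2 ∂P
      ≤ 4 * ((k - 1) ^ (2 * k) : ℕ) * M ^ (2 * k) * (n : ℝ) ^ (k - 1) := by
  have : NeZero n := ⟨by omega⟩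
  let Y : Fin n × Fin n → Ω → ℂ := fun e => a e.1 e.2
  have hY : iIndepFun Y P :=
    hindep.precomp (g := fun e : Fin n × Fin n => ((e.1 : ℕ), (e.2 : ℕ))) fun e e' h => by
      simpa [Prod.ext_iff, Fin.val_inj] using h
  have hYmean : ∀ e, ∫ ω, Y e ω ∂P = 0 := fun e => (hident _ _).integral_eq.trans hmean
  have hYbound : ∀ e, ∀ᵐ ω ∂P, ‖Y e ω‖ ≤ M := fun e =>
    (hident _ _).symm.ae_snd (measurableSet_le measurable_norm measurable_const) hbound
  have h := integral_norm_sum_prod_walkEdge_sub_sq_le hY (fun e => hmeas _ _) hYmean hYbound k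
  rwa [Fintype.card_fin] at h

end Rsum

/-- **Variance bound for the degenerate part** (proof of Lemma 3.5): for every `k ≥ 1` there
is a constant `C_k`, depending only on `k`, such that for i.i.d. entries with mean `0`,
variance `1` and `|a₁₁| ≤ M` a.s., `Var(r_k^{(n)}) ≤ 4 C_k M^{2k} n^{k-1}` for all `n ≥ 1`;
in particular `Var(r_k^{(n)}/n^{k/2}) → 0` as `n → ∞`. -/
theorem rsum_variance_bound (k : ℕ) (hk : 1 ≤ k) :
    ∃ C : ℝ, ∀ (Ω : Type*) [MeasurableSpace Ω] (P : Measure Ω) [IsProbabilityMeasure P]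
      (a : ℕ → ℕ → Ω → ℂ),
      (∀ i j, Measurable (a i j)) →
      iIndepFun (fun p : ℕ × ℕ => a p.1 p.2) P →
      (∀ i j, IdentDistrib (a i j) (a 0 0) P P) →
      (∫ ω, a 0 0 ω ∂P = 0) →
      (∫ ω, ‖a 0 0 ω‖ ^ 2 ∂P = 1) →
      ∀ M : ℝ, 0 < M → (∀ᵐ ω ∂P, ‖a 0 0 ω‖ ≤ M) →
      (∀ n : ℕ, 1 ≤ n →
        ∫ ω, ‖rsum a k n ω - ∫ ω', rsum a k n ω' ∂P‖ ^ 2 ∂P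
          ≤ 4 * C * M ^ (2 * k) * (n : ℝ) ^ (k - 1)) ∧
      Tendsto
        (fun n : ℕ =>
          ∫ ω, ‖rsum a k n ω / ((Real.sqrt n : ℂ) ^ k)
            - ∫ ω', rsum a k n ω' / ((Real.sqrt n : ℂ) ^ k) ∂P‖ ^ 2 ∂P)
        atTop (nhds 0) := by
  refine ⟨(((k - 1) ^ (2 * k) : ℕ) : ℝ), fun Ω _ P _ a hmeas hindep hident hmean _ M _ hbound => ?_⟩
  set C : ℝ := (((k - 1) ^ (2 * k) : ℕ) : ℝ)
  have hvar n (hn : 1 ≤ n) := integral_norm_rsum_sub_sq_le hmeas hindep hident hmean hbound k hn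
  refine ⟨hvar, squeeze_zero' (.of_forall fun n => integral_nonneg fun ω => by positivity) ?_
    (tendsto_const_div_atTop_nhds_zero_nat (4 * C * M ^ (2 * k)))⟩
  filter_upwards [eventually_ge_atTop 1] with n hn
  have hn₀ : (0 : ℝ) < n := by exact_mod_cast hn
  have hscale : ‖(Real.sqrt n : ℂ) ^ k‖ ^ 2 = (n : ℝ) ^ (k - 1) * n := by
    rw [norm_pow, Complex.norm_real, Real.norm_of_nonneg (Real.sqrt_nonneg _), ← pow_mul,
      mul_comm, pow_mul, Real.sq_sqrt hn₀.le, ← pow_succ, Nat.sub_add_cancel hk]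
  rw [integral_norm_div_sub_sq, hscale, div_le_div_iff₀ (by positivity) hn₀]
  nlinarith [hvar n hn, pow_pos hn₀ (k - 1)]

end
end
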